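/- arXiv:2602.09885 — 8 statements merged into one kernel-verified Lean document; each statement's English description precedes it below -/
import Mathlib

section
/- Let Y be a connective cochain complex of k-vector spaces and X = Y_K its denormalization. Then for every f ∈ Y^p and g ∈ Y^q the Alexander–Whitney element aw(f ⊗ g) = (d^{p+1})^q(f ⊗ e_{{1,…,p}}) ⊗ (d^0)^p(g ⊗ e_{{1,…,q}}) lies in the joint-normalized part (X ⊗ X)_N^{p+q}, and the normalized shuffle map applied to it returns f ⊗ g: sh(aw(f ⊗ g)) = f ⊗ g ∈ Y^p ⊗ Y^q. In other words, the normalized shuffle map is a left inverse of the Alexander–Whitney map. -/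
/-! Statement 5: the normalized shuffle map is a left inverse of the Alexander–Whitney map,
for the denormalization `Y_K` of a connective cochain complex `Y` of `k`-vector spaces. -/

open TensorProduct

universe u v

/-- A connective cochain complex of `k`-vector spaces. -/
structure Cx (k : Type u) [Field k] where
  Y : ℕ → Type v
  grp : ∀ n, AddCommGroup (Y n)
  mod : ∀ n, Module k (Y n)
  d : ∀ n, Y n →ₗ[k] Y (n + 1)
  dd : ∀ n (y : Y n), d (n + 1) (d n y) = 0

attribute [instance] Cx.grp Cx.mod

variable {k : Type u} [Field k]

namespace Cx

/-- Cast along an equality of degrees. -/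
def yc (C : Cx k) {a b : ℕ} (h : a = b) : C.Y a →ₗ[k] C.Y b := by
  subst h; exact LinearMap.id

/-- The denormalization `Y_K` in degree `n`: `⊕_{α ⊆ {1,…,n}} Y^{|α|}`, with subsets of
`{1,…,n}` modelled as `Finset (Fin n)` (the element `t : Fin n` represents the label `t+1`). -/
abbrev K (C : Cx k) (n : ℕ) : Type v := ∀ α : Finset (Fin n), C.Y α.card

/-- The elementary element `f ⊗ e_α` of `Y_K`. -/
def single (C : Cx k) {n : ℕ} (α : Finset (Fin n)) (f : C.Y α.card) : C.K n :=
  Pi.single α f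

/-- Codegeneracy `s^j : Y_K^{n+1} → Y_K^n` (`j : Fin (n+1)` is the 0-based index; it is the
paper's `s^{j-1}` for `j ∈ {1,…,n+1}`): on `f ⊗ e_α` it gives `f ⊗ e_{σ_j(α)}` if `j ∉ α`
and `0` otherwise; pointwise this is precomposition with the subset embedding skipping `j`. -/
noncomputable def sK (C : Cx k) (n : ℕ) (j : Fin (n + 1)) : C.K (n + 1) →ₗ[k] C.K n :=
  LinearMap.pi fun β =>
    (C.yc (Finset.card_map _)).comp (LinearMap.proj (β.map (Fin.succAboveEmb j)))

/-- The relabelling `δ` skipping the (0-based) label `a`, applied to subsets. -/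
def skipSet {n : ℕ} (a : ℕ) (α : Finset (Fin n)) : Finset (Fin (n + 1)) :=
  α.map (Fin.succAboveEmb ⟨min a n, by omega⟩)

lemma skipSet_card {n : ℕ} (a : ℕ) (α : Finset (Fin n)) : (skipSet a α).card = α.card :=
  Finset.card_map _

lemma zero_not_mem_skipSet_zero {n : ℕ} (α : Finset (Fin n)) :
    (0 : Fin (n + 1)) ∉ skipSet 0 α := by
  simp only [skipSet, Finset.mem_map, Fin.succAboveEmb_apply]
  rintro ⟨x, -, hx⟩
  exact Fin.succAbove_ne _ x (hx.trans (by ext; simp))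

lemma insert_zero_card {n : ℕ} (α : Finset (Fin n)) :
    α.card + 1 = (insert (0 : Fin (n + 1)) (skipSet 0 α)).card := by
  rw [Finset.card_insert_of_notMem (zero_not_mem_skipSet_zero α), skipSet_card]

/-- Coface `d^i : Y_K^n → Y_K^{n+1}` of the denormalization, `i = 0,…,n+1` (paper indexing):
`d^0(f ⊗ e_α) = f ⊗ e_{δ_1 α} + (df) ⊗ e_{{1} ∪ δ_1 α}`, and for `i ≥ 1`,
`d^i(f ⊗ e_α) = f ⊗ e_{δ_i α}` if `i ∉ α` and `f ⊗ (e_{δ_i α} + e_{δ_{i+1} α})` if `i ∈ α`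
(note `δ_i α = δ_{i+1} α` when `i ∉ α`). -/
noncomputable def dK (C : Cx k) (n : ℕ) : ℕ → (C.K n →ₗ[k] C.K (n + 1))
  | 0 =>
      ∑ α : Finset (Fin n),
        ((LinearMap.single k (fun β : Finset (Fin (n + 1)) => C.Y β.card) (skipSet 0 α)).comp
            ((C.yc (skipSet_card 0 α).symm).comp (LinearMap.proj α))
          + (LinearMap.single k (fun β : Finset (Fin (n + 1)) => C.Y β.card)
                (insert (0 : Fin (n + 1)) (skipSet 0 α))).comp
              ((C.yc (insert_zero_card α)).comp ((C.d α.card).comp (LinearMap.proj α))))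
  | (j + 1) =>
      ∑ α : Finset (Fin n),
        ((LinearMap.single k (fun β : Finset (Fin (n + 1)) => C.Y β.card) (skipSet (j + 1) α)).comp
            ((C.yc (skipSet_card (j + 1) α).symm).comp (LinearMap.proj α))
          + if h : ∃ hj : j < n, (⟨j, hj⟩ : Fin n) ∈ α then
              (LinearMap.single k (fun β : Finset (Fin (n + 1)) => C.Y β.card) (skipSet j α)).comp
                ((C.yc (skipSet_card j α).symm).comp (LinearMap.proj α))
            else 0)

/-- Iterated coface `(d^i)^m : Y_K^p → Y_K^{p+m}`. -/
noncomputable def dIterK (C : Cx k) (i p : ℕ) : (m : ℕ) → (C.K p →ₗ[k] C.K (p + m))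
  | 0 => LinearMap.id
  | (m + 1) => (C.dK (p + m) i).comp (C.dIterK i p m)

/-- Cast of the denormalization along an equality of degrees. -/
def kc (C : Cx k) {a b : ℕ} (h : a = b) : C.K a →ₗ[k] C.K b := by
  subst h; exact LinearMap.id

/-- The joint-normalized part `(Y_K ⊗ Y_K)_N^n = ⋂_j ker (s^j ⊗ s^j)`. -/
noncomputable def JointN (C : Cx k) (n : ℕ) : Submodule k (C.K n ⊗[k] C.K n) :=
  ⨅ (m : ℕ) (h : n = m + 1) (j : Fin (m + 1)),
    LinearMap.ker ((TensorProduct.map (C.sK m j) (C.sK m j)).comp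
      (TensorProduct.map (C.kc h) (C.kc h)))

/-- `sgn(α,β)`: the sign of the permutation sorting the concatenation of the increasing
enumerations of `α` and `β`, i.e. `(-1)` to the number of pairs `(a,b) ∈ α × β` with `b < a`. -/
def shSgn {n : ℕ} (α β : Finset (Fin n)) : ℤ :=
  (-1) ^ (∑ a ∈ α, (β.filter fun b : Fin n => (b : ℕ) < (a : ℕ)).card)

lemma card_lt_fin_succ {n : ℕ} (α : Finset (Fin n)) : α.card < n + 1 := by
  have := Finset.card_le_univ α
  simp only [Finset.card_univ, Fintype.card_fin] at this
  omega

lemma card_compl_fin {n : ℕ} (α : Finset (Fin n)) : αᶜ.card = n - α.card := by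
  rw [Finset.card_compl, Fintype.card_fin]

/-- The target `⊕_{p+q=n} Y^p ⊗ Y^q` of the normalized shuffle map. -/
abbrev ShT (C : Cx k) (n : ℕ) : Type _ :=
  ∀ p : Fin (n + 1), C.Y (p : ℕ) ⊗[k] C.Y (n - (p : ℕ))

/-- The (bilinear form of the) shuffle map: on `(f ⊗ e_α) ⊗ (g ⊗ e_β)` it is `0` unless
`β = αᶜ`, in which case it is `sgn(α,β) • (f ⊗ g)`; restricted to the joint-normalized
part this is the normalized shuffle map. -/
noncomputable def shB (C : Cx k) (n : ℕ) : C.K n →ₗ[k] C.K n →ₗ[k] C.ShT n :=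
  ∑ α : Finset (Fin n),
    shSgn α αᶜ •
      (((TensorProduct.mk k (C.Y α.card) (C.Y αᶜ.card)).compl₁₂
            (LinearMap.proj α) (LinearMap.proj αᶜ)).compr₂
        ((LinearMap.single k (fun p : Fin (n + 1) => C.Y (p : ℕ) ⊗[k] C.Y (n - (p : ℕ)))
              ⟨α.card, card_lt_fin_succ α⟩).comp
          (TensorProduct.map LinearMap.id (C.yc (card_compl_fin α)))))

/-- The normalized shuffle map `sh : (Y_K ⊗ Y_K)_N^n → ⊕_{p+q=n} Y^p ⊗ Y^q`
(as a linear map on the whole tensor square, extending it as above). -/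
noncomputable def shMap (C : Cx k) (n : ℕ) : C.K n ⊗[k] C.K n →ₗ[k] C.ShT n :=
  TensorProduct.lift (C.shB n)

lemma univ_card_fin (n : ℕ) : (Finset.univ : Finset (Fin n)).card = n := by simp

/-- The Alexander–Whitney element
`aw(f ⊗ g) = (d^{p+1})^q (f ⊗ e_{{1,…,p}}) ⊗ (d^0)^p (g ⊗ e_{{1,…,q}})`. -/
noncomputable def awEl (C : Cx k) (p q : ℕ) (f : C.Y p) (g : C.Y q) :
    C.K (p + q) ⊗[k] C.K (p + q) :=
  (C.dIterK (p + 1) p q (C.single Finset.univ (C.yc (univ_card_fin p).symm f))) ⊗ₜ[k]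
    (C.kc (Nat.add_comm q p) (C.dIterK 0 q p (C.single Finset.univ (C.yc (univ_card_fin q).symm g))))

end Cx

/-! Iterating the coface `d^{p+1}` on `f ⊗ e_{1,…,p}` only relabels, giving `f ⊗ e_A` with
`A = {1,…,p}`. Iterating `d^0` on `g ⊗ e_{1,…,q}` gives `g ⊗ e_T` plus the terms
`dg ⊗ e_{{j} ∪ T}`, `j ≤ p`, where `T = {p+1,…,p+q}`; all further terms carry `d(dg) = 0`.
Every codegeneracy index lies in `A` or in all the subsets occurring in the second factor, so
the Alexander–Whitney element is jointly normalized, and the only summand with complementary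
subsets is `(f ⊗ e_A) ⊗ (g ⊗ e_T)`, whose shuffle sign is `+1` because `A` precedes `T`. -/

namespace Cx

variable (C : Cx k)

lemma yc_yc {a b c : ℕ} (h : a = b) (h' : b = c) (x : C.Y a) :
    C.yc h' (C.yc h x) = C.yc (h.trans h') x := by
  subst h h'; rfl

lemma d_yc {a b : ℕ} (h : a = b) (x : C.Y a) :
    C.d b (C.yc h x) = C.yc (congrArg (· + 1) h) (C.d a x) := by
  subst h; rfl

lemma single_congr_set {n : ℕ} {S S' : Finset (Fin n)} (h : S = S') (f : C.Y S.card) :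
    Pi.single (M := fun α : Finset (Fin n) => C.Y α.card) S f =
      Pi.single S' (C.yc (congrArg Finset.card h) f) := by
  subst h; rfl

lemma kc_single {a b : ℕ} (h : a = b) {S : Finset (Fin a)} {S' : Finset (Fin b)}
    (hS : ∀ x : Fin a, x ∈ S ↔ Fin.cast h x ∈ S') (v : C.Y S.card) :
    C.kc h (Pi.single S v) = Pi.single S' (C.yc (by subst h; congr 1; ext; simp [hS]) v) := by
  subst h
  obtain rfl : S = S' := by ext x; simpa using hS x
  rfl

lemma dK_zero_single {n : ℕ} (A : Finset (Fin n)) (f : C.Y A.card) :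
    C.dK n 0 (Pi.single A f) =
      Pi.single (skipSet 0 A) (C.yc (skipSet_card 0 A).symm f) +
        Pi.single (insert 0 (skipSet 0 A)) (C.yc (insert_zero_card A) (C.d A.card f)) := by
  simp only [dK, LinearMap.sum_apply, LinearMap.add_apply, LinearMap.comp_apply,
    LinearMap.proj_apply]
  rw [Finset.sum_eq_single A]
  · simp
  · intro α _ hα
    simp [Pi.single_eq_of_ne hα]
  · simp

lemma dK_succ_single_of_notMem {n : ℕ} (j : ℕ) (A : Finset (Fin n)) (f : C.Y A.card)
    (hj : ¬ ∃ hj : j < n, (⟨j, hj⟩ : Fin n) ∈ A) :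
    C.dK n (j + 1) (Pi.single A f) =
      Pi.single (skipSet (j + 1) A) (C.yc (skipSet_card (j + 1) A).symm f) := by
  simp only [dK, LinearMap.sum_apply, LinearMap.add_apply, LinearMap.comp_apply,
    LinearMap.proj_apply]
  rw [Finset.sum_eq_single A]
  · simp [hj]
  · intro α _ hα
    split_ifs <;> simp [Pi.single_eq_of_ne hα]
  · simp

lemma sK_eq_zero_of_forall_notMem {m : ℕ} (j : Fin (m + 1)) {x : C.K (m + 1)}
    (hx : ∀ α, j ∉ α → x α = 0) : C.sK m j x = 0 := by
  funext β
  have hj : j ∉ β.map (Fin.succAboveEmb j) := by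
    simp [Fin.succAbove_ne]
  simp [sK, hx _ hj]

lemma single_apply_eq_zero_of_notMem {n : ℕ} {A α : Finset (Fin n)} {j : Fin n} (hA : j ∈ A)
    (hα : j ∉ α) (f : C.Y A.card) :
    Pi.single (M := fun α : Finset (Fin n) => C.Y α.card) A f α = 0 := by
  rw [Pi.single_eq_of_ne (ne_of_mem_of_not_mem' hA hα).symm]

lemma tmul_mem_jointN {n : ℕ} (x y : C.K n)
    (h : ∀ j : Fin n, (∀ α, j ∉ α → x α = 0) ∨ (∀ β, j ∉ β → y β = 0)) :
    x ⊗ₜ[k] y ∈ C.JointN n := by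
  simp only [JointN, Submodule.mem_iInf, LinearMap.mem_ker]
  rintro m rfl j
  rcases h j with hx | hy
  · simp [kc, C.sK_eq_zero_of_forall_notMem j hx]
  · simp [kc, C.sK_eq_zero_of_forall_notMem j hy]

lemma shB_single_left {n : ℕ} (A T : Finset (Fin n)) (hT : Aᶜ = T) (f : C.Y A.card)
    (y : C.K n) :
    C.shB n (Pi.single A f) y =
      shSgn A T • Pi.single (⟨A.card, card_lt_fin_succ A⟩ : Fin (n + 1))
        (f ⊗ₜ[k] C.yc (by rw [← hT, card_compl_fin]) (y T)) := by
  subst hT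
  simp only [shB, LinearMap.sum_apply, LinearMap.smul_apply, LinearMap.compr₂_apply,
    LinearMap.compl₁₂_apply, TensorProduct.mk_apply, LinearMap.comp_apply, LinearMap.proj_apply]
  rw [Finset.sum_eq_single A]
  · simp
  · intro α _ hα
    simp [Pi.single_eq_of_ne hα]
  · simp

lemma single_tmul_yc {n a b : ℕ} (h : a = b) (ha : a < n + 1) (hb : b < n + 1) (x : C.Y a)
    (y : C.Y (n - a)) :
    Pi.single (M := fun r : Fin (n + 1) => C.Y (r : ℕ) ⊗[k] C.Y (n - (r : ℕ))) ⟨a, ha⟩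
        (x ⊗ₜ[k] y) =
      Pi.single (⟨b, hb⟩ : Fin (n + 1)) (C.yc h x ⊗ₜ[k] C.yc (congrArg (n - ·) h) y) := by
  subst h; rfl

lemma shSgn_eq_one_of_forall_lt {n : ℕ} {α β : Finset (Fin n)}
    (h : ∀ a ∈ α, ∀ b ∈ β, a < b) : shSgn α β = 1 := by
  rw [shSgn, Finset.sum_eq_zero, pow_zero]
  intro a ha
  rw [Finset.card_eq_zero, Finset.filter_eq_empty_iff]
  exact fun b hb => not_lt.mpr (Fin.val_le_of_le (h a ha b hb).le)

lemma skipSet_zero {n : ℕ} (α : Finset (Fin n)) : skipSet 0 α = α.map (Fin.succEmb n) := by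
  change α.map (Fin.succAboveEmb 0) = _
  ext; simp

def initSeg (p n : ℕ) : Finset (Fin n) := Finset.univ.filter fun t => (t : ℕ) < p

def finalSeg (p n : ℕ) : Finset (Fin n) := Finset.univ.filter fun t => p ≤ (t : ℕ)

@[simp]
lemma mem_initSeg {p n : ℕ} {t : Fin n} : t ∈ initSeg p n ↔ (t : ℕ) < p := by
  simp [initSeg]

@[simp]
lemma mem_finalSeg {p n : ℕ} {t : Fin n} : t ∈ finalSeg p n ↔ p ≤ (t : ℕ) := by
  simp [finalSeg]

lemma initSeg_eq_map {p n : ℕ} (h : p ≤ n) :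
    initSeg p n = Finset.univ.map (Fin.castLEEmb h) := by
  ext t
  simp only [mem_initSeg, Finset.mem_map, Finset.mem_univ, true_and, Fin.castLEEmb_apply]
  exact ⟨fun ht => ⟨⟨t, ht⟩, rfl⟩, by rintro ⟨s, rfl⟩; exact s.isLt⟩

lemma card_initSeg {p n : ℕ} (h : p ≤ n) : (initSeg p n).card = p := by
  simp [initSeg_eq_map h]

lemma compl_initSeg (p n : ℕ) : (initSeg p n)ᶜ = finalSeg p n := by
  ext; simp

lemma card_finalSeg {p n : ℕ} (h : p ≤ n) : (finalSeg p n).card = n - p := by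
  rw [← compl_initSeg, card_compl_fin, card_initSeg h]

lemma card_insert_finalSeg {p n : ℕ} {j : Fin n} (hj : (j : ℕ) < p) (h : p ≤ n) :
    (insert j (finalSeg p n)).card = n - p + 1 := by
  rw [Finset.card_insert_of_notMem (by simpa using hj), card_finalSeg h]

lemma skipSet_initSeg {p n a : ℕ} (hp : p ≤ n) (ha : p ≤ a) :
    skipSet a (initSeg p n) = initSeg p (n + 1) := by
  ext t
  simp only [skipSet, Finset.mem_map, Fin.succAboveEmb_apply, mem_initSeg]
  constructor
  · rintro ⟨s, hs, rfl⟩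
    rwa [Fin.succAbove_of_castSucc_lt _ _ (by rw [Fin.lt_def]; simp; omega), Fin.val_castSucc]
  · intro ht
    refine ⟨⟨t, by omega⟩, ht, ?_⟩
    rw [Fin.succAbove_of_castSucc_lt _ _ (by rw [Fin.lt_def]; simp; omega)]
    rfl

lemma skipSet_zero_finalSeg (p n : ℕ) : skipSet 0 (finalSeg p n) = finalSeg (p + 1) (n + 1) := by
  ext t
  rw [skipSet_zero]
  cases t using Fin.cases <;> simp

lemma dK_zero_single_of_d_eq_zero {n : ℕ} (A : Finset (Fin n)) (f : C.Y A.card)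
    (hf : C.d A.card f = 0) :
    C.dK n 0 (Pi.single A f) = Pi.single (skipSet 0 A) (C.yc (skipSet_card 0 A).symm f) := by
  rw [C.dK_zero_single, hf, map_zero, Pi.single_zero, add_zero]

lemma dIterK_succ_single_univ (p : ℕ) (f : C.Y p) (m : ℕ) :
    C.dIterK (p + 1) p m (Pi.single Finset.univ (C.yc (univ_card_fin p).symm f)) =
      Pi.single (initSeg p (p + m)) (C.yc (card_initSeg (Nat.le_add_right p m)).symm f) := by
  induction m with
  | zero =>
    have huniv : (Finset.univ : Finset (Fin p)) = initSeg p (p + 0) := by ext t; simp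
    rw [dIterK, LinearMap.id_apply, C.single_congr_set huniv, yc_yc]
  | succ m ih =>
    rw [dIterK, LinearMap.comp_apply, ih, C.dK_succ_single_of_notMem _ _ _ (by simp),
      C.single_congr_set (skipSet_initSeg (n := p + m) (by omega) (by omega)), yc_yc, yc_yc]
    rfl

lemma dIterK_zero_single_univ (q : ℕ) (g : C.Y q) (m : ℕ) :
    C.dIterK 0 q m (Pi.single Finset.univ (C.yc (univ_card_fin q).symm g)) =
      Pi.single (finalSeg m (q + m)) (C.yc (by rw [card_finalSeg (by omega)]; omega) g) +
        ∑ j : Fin m, Pi.single (insert (Fin.castLE (by omega) j) (finalSeg m (q + m)))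
          (C.yc (by rw [card_insert_finalSeg (by simp) (by omega)]; omega) (C.d q g)) := by
  induction m with
  | zero =>
    have huniv : (Finset.univ : Finset (Fin q)) = finalSeg 0 (q + 0) := by ext t; simp
    rw [dIterK, LinearMap.id_apply, C.single_congr_set huniv, yc_yc, Fin.sum_univ_zero]
    exact (add_zero _).symm
  | succ m ih =>
    have hT : skipSet 0 (finalSeg m (q + m)) = finalSeg (m + 1) (q + m + 1) :=
      skipSet_zero_finalSeg m (q + m)
    have hT0 : insert 0 (skipSet 0 (finalSeg m (q + m))) =
        insert (Fin.castLE (by omega) (0 : Fin (m + 1))) (finalSeg (m + 1) (q + m + 1)) := by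
      rw [hT]; rfl
    have hTj (j : Fin m) : skipSet 0 (insert (Fin.castLE (by omega) j) (finalSeg m (q + m))) =
        insert (Fin.castLE (by omega) j.succ) (finalSeg (m + 1) (q + m + 1)) := by
      rw [skipSet_zero, Finset.map_insert, ← skipSet_zero, hT]
      rfl
    have hsummand (j : Fin m) := C.dK_zero_single_of_d_eq_zero
      (insert (Fin.castLE (by omega) j) (finalSeg m (q + m)))
      (C.yc (by rw [card_insert_finalSeg (by simp) (by omega)]; omega) (C.d q g))
      (by rw [d_yc, C.dd, map_zero])
    rw [dIterK, LinearMap.comp_apply, ih, map_add, map_sum, C.dK_zero_single,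
      Finset.sum_congr rfl fun j _ => hsummand j, Fin.sum_univ_succ, C.single_congr_set hT,
      C.single_congr_set hT0, d_yc]
    simp only [fun j => C.single_congr_set (hTj j), yc_yc]
    exact add_assoc _ _ _

lemma awEl_eq (p q : ℕ) (f : C.Y p) (g : C.Y q) :
    C.awEl p q f g =
      Pi.single (initSeg p (p + q)) (C.yc (card_initSeg (Nat.le_add_right p q)).symm f) ⊗ₜ[k]
        (Pi.single (finalSeg p (p + q))
            (C.yc ((card_finalSeg (Nat.le_add_right p q)).trans
              (Nat.add_sub_cancel_left p q)).symm g) +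
          ∑ j : Fin p, Pi.single (insert (Fin.castAdd q j) (finalSeg p (p + q)))
            (C.yc (by rw [card_insert_finalSeg (by simp) (by omega)]; omega) (C.d q g))) := by
  rw [awEl, single, single, dIterK_succ_single_univ, dIterK_zero_single_univ, map_add, map_sum,
    C.kc_single _ (S' := finalSeg p (p + q)) (by simp),
    Finset.sum_congr rfl fun j _ => C.kc_single (Nat.add_comm q p)
      (S := insert (Fin.castLE (by omega) j) (finalSeg p (q + p)))
      (S' := insert (Fin.castAdd q j) (finalSeg p (p + q))) (by simp [Fin.ext_iff]) _]
  simp only [yc_yc]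

end Cx

/-- The Alexander–Whitney element lies in the joint-normalized part, and the
normalized shuffle map sends it back to `f ⊗ g` (in the summand `p + q = n`): the normalized
shuffle map is a left inverse of the Alexander–Whitney map. -/
theorem stmt_5 {k : Type u} [Field k] (C : Cx k) (p q : ℕ) (f : C.Y p) (g : C.Y q) :
    C.awEl p q f g ∈ C.JointN (p + q) ∧
      C.shMap (p + q) (C.awEl p q f g) =
        Pi.single (⟨p, by omega⟩ : Fin (p + q + 1))
          (f ⊗ₜ[k] C.yc (by omega : q = p + q - p) g) := by
  rw [C.awEl_eq]
  constructor
  · refine C.tmul_mem_jointN _ _ fun j => ?_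
    by_cases hj : (j : ℕ) < p
    · exact .inl fun α hα => C.single_apply_eq_zero_of_notMem (by simpa) hα _
    · refine .inr fun β hβ => ?_
      have hjT : j ∈ Cx.finalSeg p (p + q) := by simpa using hj
      simp [Finset.sum_apply, C.single_apply_eq_zero_of_notMem hjT hβ,
        C.single_apply_eq_zero_of_notMem (Finset.mem_insert_of_mem hjT) hβ]
  · rw [Cx.shMap, TensorProduct.lift.tmul, C.shB_single_left _ _ (Cx.compl_initSeg p (p + q)),
      Cx.shSgn_eq_one_of_forall_lt fun a ha b hb => by
        simp only [Cx.mem_initSeg, Cx.mem_finalSeg] at ha hb; omega, one_smul,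
      C.single_tmul_yc (Cx.card_initSeg (by omega)) _ (by omega)]
    rw [Pi.add_apply, Pi.single_eq_same, Finset.sum_apply, Finset.sum_eq_zero fun j _ =>
      C.single_apply_eq_zero_of_notMem (Finset.mem_insert_self _ _) (by simp) _, add_zero]
    simp only [Cx.yc_yc]
    rfl
end

section
/- Let n ≥ 1, let V be a set, W an additive commutative group, and π_1,…,π_n : V → V maps satisfying π_j ∘ π_j = π_j and π_j ∘ π_k = π_k ∘ π_j for all j, k. Write S_j = {x ∈ V : π_j(x) = x}. Let g_1,…,g_n : V → W be functions that agree on intersections: g_j(x) = g_k(x) whenever x ∈ S_j ∩ S_k. For a nonempty subset α ⊆ {1,…,n} let π_α denote the composition of the maps π_j for j ∈ α (by commutativity the order is immaterial), and define g : V → W by g(x) = Σ_{∅ ≠ α ⊆ {1,…,n}} (−1)^{|α|+1} g_{min α}(π_α(x)). Then g extends every g_j: for every j and every x ∈ S_j one has g(x) = g_j(x). -/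
/-!
Fix `j` and `x ∈ S j`. The nonempty index sets split into pairs `β`, `insert j β` with `j ∉ β`,
plus the singleton `{j}`. Since `π j x = x`, the two members of a pair evaluate their `g`'s at
the same point `y = π_β x`, which is fixed by every `π k` with `k ∈ insert j β`; so the two `g`'s
agree at `y`, while the signs are opposite. Only the term of `{j}` survives, and it is `g j x`.
-/

/-- The composite `π_α` of the maps `π j` for `j ∈ α` (composed in increasing order of the
indices; by commutativity of the `π j` the order is immaterial). -/
def compProj {V : Type*} (π : ℕ → V → V) (α : Finset ℕ) : V → V :=
  (α.sort (· ≤ ·)).foldr (fun j f => π j ∘ f) id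

open Finset

theorem Finset.min_untopD_mem {ι : Type*} [LinearOrder ι] {s : Finset ι} (hs : s.Nonempty)
    (d : ι) : s.min.untopD d ∈ s := by
  rw [← coe_min' hs, WithTop.untopD_coe]
  exact min'_mem s hs

theorem sum_filter_nonempty_powerset_insert {ι W : Type*} [DecidableEq ι] [AddCommGroup W]
    {s : Finset ι} {j : ι} (hj : j ∉ s) (f : Finset ι → W)
    (hf : ∀ t ⊆ s, t.Nonempty → f (insert j t) = -f t) :
    ∑ t ∈ (insert j s).powerset with t.Nonempty, f t = f {j} := by
  have hpair : ∀ t ∈ s.powerset,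
      ((if t.Nonempty then f t else 0) + if (insert j t).Nonempty then f (insert j t) else 0) =
        if t = ∅ then f {j} else 0 := by
    intro t ht
    rcases t.eq_empty_or_nonempty with rfl | hne
    · simp
    · simp [hne, hne.ne_empty, hf t (mem_powerset.1 ht) hne]
  rw [sum_filter, sum_powerset_insert hj, ← sum_add_distrib, sum_congr rfl hpair,
    sum_ite_eq', if_pos (empty_mem_powerset s)]

section CompProj

variable {V : Type*} {π : ℕ → V → V} {α : Finset ℕ} {j k : ℕ}

theorem compProj_eq_noncommProd
    (hcomm : (α : Set ℕ).Pairwise fun j l => π j ∘ π l = π l ∘ π j) :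
    compProj π α = α.noncommProd (β := Function.End V) π hcomm := by
  have h := noncommProd_toFinset (β := Function.End V) (α.sort (· ≤ ·)) π
    (by rw [sort_toFinset]; exact hcomm) (α.sort_nodup _)
  simp only [sort_toFinset] at h
  rw [h]
  exact (List.foldr_map (β := Function.End V) ..).symm

theorem compProj_singleton : compProj π {j} = π j := by
  simp [compProj]

theorem compProj_insert (hj : j ∉ α)
    (hcomm : (↑(insert j α) : Set ℕ).Pairwise fun j l => π j ∘ π l = π l ∘ π j) :
    compProj π (insert j α) = π j ∘ compProj π α := by
  rw [compProj_eq_noncommProd hcomm, compProj_eq_noncommProd (hcomm.mono (by simp))]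
  exact noncommProd_insert_of_notMem (β := Function.End V) α j π hcomm hj

theorem compProj_insert' (hj : j ∉ α)
    (hcomm : (↑(insert j α) : Set ℕ).Pairwise fun j l => π j ∘ π l = π l ∘ π j) :
    compProj π (insert j α) = compProj π α ∘ π j := by
  rw [compProj_eq_noncommProd hcomm, compProj_eq_noncommProd (hcomm.mono (by simp))]
  exact noncommProd_insert_of_notMem' (β := Function.End V) α j π hcomm hj

theorem apply_compProj_of_mem (hk : k ∈ α) (hidem : π k ∘ π k = π k)
    (hcomm : (α : Set ℕ).Pairwise fun j l => π j ∘ π l = π l ∘ π j) (x : V) :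
    π k (compProj π α x) = compProj π α x := by
  rw [← insert_erase hk] at hcomm ⊢
  rw [compProj_insert (notMem_erase k α) hcomm]
  exact congrFun hidem _

theorem compProj_insert_apply_of_apply_eq (hj : j ∉ α)
    (hcomm : (↑(insert j α) : Set ℕ).Pairwise fun j l => π j ∘ π l = π l ∘ π j)
    {x : V} (hx : π j x = x) :
    compProj π (insert j α) x = compProj π α x := by
  rw [compProj_insert' hj hcomm, Function.comp_apply, hx]

end CompProj

theorem stmt_8_general {V W : Type*} [AddCommGroup W] (n : ℕ)
    (π : ℕ → V → V)
    (hidem : ∀ j ∈ Finset.Icc 1 n, π j ∘ π j = π j)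
    (hcomm : ∀ j ∈ Finset.Icc 1 n, ∀ l ∈ Finset.Icc 1 n, π j ∘ π l = π l ∘ π j)
    (S : ℕ → Set V) (hS : ∀ j, S j = {x | π j x = x})
    (g : ℕ → V → W)
    (hagree : ∀ j ∈ Finset.Icc 1 n, ∀ l ∈ Finset.Icc 1 n, ∀ x ∈ S j ∩ S l, g j x = g l x) :
    ∀ j ∈ Finset.Icc 1 n, ∀ x ∈ S j,
      (∑ α ∈ (Finset.Icc 1 n).powerset.filter (fun α => α.Nonempty),
        ((-1 : ℤ) ^ (α.card + 1)) • g (α.min.untopD 0) (compProj π α x)) = g j x := by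
  intro j hj x hx
  rw [hS, Set.mem_ofPred_eq] at hx
  rw [← insert_erase hj, sum_filter_nonempty_powerset_insert (notMem_erase j _)]
  · rw [card_singleton, min_singleton, WithTop.untopD_coe, compProj_singleton, hx]
    norm_num
  intro β hβ hne
  have hjβ : j ∉ β := fun h => notMem_erase j _ (hβ h)
  have hsub : insert j β ⊆ Icc 1 n := insert_subset hj (hβ.trans (erase_subset _ _))
  have hcommβ : (↑(insert j β) : Set ℕ).Pairwise fun j l => π j ∘ π l = π l ∘ π j :=
    fun a ha b hb _ => hcomm a (hsub (mem_coe.1 ha)) b (hsub (mem_coe.1 hb))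
  have hy : compProj π (insert j β) x = compProj π β x :=
    compProj_insert_apply_of_apply_eq hjβ hcommβ hx
  have hfix : ∀ k ∈ insert j β, compProj π β x ∈ S k := fun k hk => by
    rw [hS, Set.mem_ofPred_eq, ← hy]
    exact apply_compProj_of_mem hk (hidem k (hsub hk)) hcommβ x
  have hmin : (insert j β).min.untopD 0 ∈ insert j β := min_untopD_mem (insert_nonempty j β) 0
  have hmin' : β.min.untopD 0 ∈ insert j β := mem_insert_of_mem (min_untopD_mem hne 0)
  rw [hy, hagree _ (hsub hmin) _ (hsub hmin') _ ⟨hfix _ hmin, hfix _ hmin'⟩,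
    card_insert_of_notMem hjβ, pow_succ, mul_neg_one, neg_smul]

/-- Let `π_1, …, π_n : V → V` be commuting idempotent maps with fixed-point
sets `S_j`, and `g_1, …, g_n : V → W` functions into an additive commutative group that agree
on the intersections `S_j ∩ S_l`.  Then the inclusion–exclusion combination
`g(x) = Σ_{∅ ≠ α ⊆ {1,…,n}} (-1)^{|α|+1} g_{min α}(π_α(x))` extends every `g_j`:
`g(x) = g_j(x)` for `x ∈ S_j`. -/
theorem stmt_8 {V W : Type*} [AddCommGroup W] (n : ℕ) (hn : 1 ≤ n)
    (π : ℕ → V → V)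
    (hidem : ∀ j ∈ Finset.Icc 1 n, π j ∘ π j = π j)
    (hcomm : ∀ j ∈ Finset.Icc 1 n, ∀ l ∈ Finset.Icc 1 n, π j ∘ π l = π l ∘ π j)
    (S : ℕ → Set V) (hS : ∀ j, S j = {x | π j x = x})
    (g : ℕ → V → W)
    (hagree : ∀ j ∈ Finset.Icc 1 n, ∀ l ∈ Finset.Icc 1 n, ∀ x ∈ S j ∩ S l, g j x = g l x) :
    ∀ j ∈ Finset.Icc 1 n, ∀ x ∈ S j,
      (∑ α ∈ (Finset.Icc 1 n).powerset.filter (fun α => α.Nonempty),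
        ((-1 : ℤ) ^ (α.card + 1)) • g (α.min.untopD 0) (compProj π α x)) = g j x :=
  stmt_8_general n π hidem hcomm S hS g hagree
end

section
/- Let M be a finite-dimensional real C^∞ manifold without boundary which is Hausdorff and σ-compact. Let n ≥ 1, let S_1,…,S_n be closed subsets of M, let U ⊆ M be open with ⋂_{j=1}^n S_j ⊆ U, and let f : M → ℝ be a C^∞ function with f ≡ 0 on each S_j and f ≡ 0 on U. Then there exist C^∞ functions a_1,…,a_n, b_1,…,b_n : M → ℝ such that f = Σ_{j=1}^n a_j·b_j, every a_j vanishes on S_1 ∪ ⋯ ∪ S_n, and every b_j vanishes on an open neighborhood of S_j. In particular f belongs to Σ_{j=1}^n (I_N ∩ I(S_j)²), where I(S) denotes the ideal of smooth functions vanishing on S and I_N = ⋂_k I(S_k). -/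
open Manifold Set
open scoped ContDiff

/-!
A smooth partition of unity `χ` on the closed set `Uᶜ`, subordinate to the open cover by the
complements `(S j)ᶜ` (which cover `Uᶜ` because `⋂ S j ⊆ U`), gives `f = Σ_j f χ_j`: the identity
holds on `Uᶜ` since `Σ_j χ_j = 1` there, and on `U` since `f = 0` there. Each `χ_j` vanishes on
the complement of its closed support, an open neighbourhood of `S j`, while `f` vanishes on every
`S l`; so `a_j = f`, `b_j = χ_j` and `u_j = f χ_j` work.
-/

section

variable {E H M : Type*} [NormedAddCommGroup E] [NormedSpace ℝ E] [TopologicalSpace H]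
  {I : ModelWithCorners ℝ E H} [TopologicalSpace M] [ChartedSpace H M]

theorem SmoothPartitionOfUnity.sum_mul_eq_of_eq_zero_off {ι : Type*} [Fintype ι] {s : Set M}
    (χ : SmoothPartitionOfUnity ι I M s) {f : M → ℝ} (hf : ∀ x ∉ s, f x = 0) (x : M) :
    ∑ j, f x * χ j x = f x := by
  by_cases hx : x ∈ s
  · rw [← Finset.mul_sum, ← finsum_eq_sum_of_fintype, χ.sum_eq_one hx, mul_one]
  · simp [hf x hx]

variable (I) in
theorem exists_sum_mul_of_eq_zero_on_nhds_iInter [FiniteDimensional ℝ E] [IsManifold I ∞ M]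
    [T2Space M] [SigmaCompactSpace M] {ι : Type*} [Fintype ι] {S : ι → Set M}
    (hS : ∀ j, IsClosed (S j)) {U : Set M} (hU : IsOpen U) (hsub : ⋂ j, S j ⊆ U)
    {f : M → ℝ} (hfU : ∀ x ∈ U, f x = 0) :
    ∃ χ : ι → M → ℝ, (∀ j, ContMDiff I 𝓘(ℝ, ℝ) ∞ (χ j)) ∧ (∀ x, f x = ∑ j, f x * χ j x) ∧
      ∀ j, ∃ W : Set M, IsOpen W ∧ S j ⊆ W ∧ ∀ x ∈ W, χ j x = 0 := by
  have hcover : Uᶜ ⊆ ⋃ j, (S j)ᶜ := by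
    rw [← compl_iInter]
    exact compl_subset_compl.mpr hsub
  obtain ⟨χ, hχ⟩ := SmoothPartitionOfUnity.exists_isSubordinate I hU.isClosed_compl
    (fun j => (S j)ᶜ) (fun j => (hS j).isOpen_compl) hcover
  refine ⟨fun j => χ j, fun j => (χ j).contMDiff,
    fun x => (χ.sum_mul_eq_of_eq_zero_off (fun y hy => hfU y (not_not.mp hy)) x).symm,
    fun j => ⟨(tsupport (χ j))ᶜ, (isClosed_tsupport _).isOpen_compl,
      subset_compl_comm.mp (hχ j), fun x hx => image_eq_zero_of_notMem_tsupport hx⟩⟩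

end

theorem stmt_11_general {d : ℕ} {M : Type*} [TopologicalSpace M]
    [ChartedSpace (EuclideanSpace ℝ (Fin d)) M]
    [IsManifold (𝓡 d) (⊤ : ℕ∞) M] [T2Space M] [SigmaCompactSpace M]
    (n : ℕ)
    (S : Fin n → Set M) (hcl : ∀ j, IsClosed (S j))
    (U : Set M) (hU : IsOpen U) (hsub : (⋂ j, S j) ⊆ U)
    (f : M → ℝ) (hf : ContMDiff (𝓡 d) 𝓘(ℝ, ℝ) (⊤ : ℕ∞) f)
    (hfS : ∀ j, ∀ x ∈ S j, f x = 0) (hfU : ∀ x ∈ U, f x = 0) :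
    (∃ a b : Fin n → M → ℝ,
      (∀ j, ContMDiff (𝓡 d) 𝓘(ℝ, ℝ) (⊤ : ℕ∞) (a j) ∧ ContMDiff (𝓡 d) 𝓘(ℝ, ℝ) (⊤ : ℕ∞) (b j)) ∧
      (∀ x, f x = ∑ j, a j x * b j x) ∧
      (∀ j, ∀ x ∈ ⋃ l, S l, a j x = 0) ∧
      (∀ j, ∃ W : Set M, IsOpen W ∧ S j ⊆ W ∧ ∀ x ∈ W, b j x = 0)) ∧
    (∃ u : Fin n → M → ℝ,
      (∀ j, ContMDiff (𝓡 d) 𝓘(ℝ, ℝ) (⊤ : ℕ∞) (u j)) ∧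
      (∀ x, f x = ∑ j, u j x) ∧
      (∀ j l, ∀ x ∈ S l, u j x = 0) ∧
      (∀ j, ∃ (mm : ℕ) (g h : Fin mm → M → ℝ),
        (∀ i, ContMDiff (𝓡 d) 𝓘(ℝ, ℝ) (⊤ : ℕ∞) (g i) ∧ ContMDiff (𝓡 d) 𝓘(ℝ, ℝ) (⊤ : ℕ∞) (h i)) ∧
        (∀ i, ∀ x ∈ S j, g i x = 0 ∧ h i x = 0) ∧
        (∀ x, u j x = ∑ i, g i x * h i x))) := by
  obtain ⟨χ, hχ, hsum, hχS⟩ := exists_sum_mul_of_eq_zero_on_nhds_iInter (𝓡 d) hcl hU hsub hfU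
  have hfS' : ∀ x ∈ ⋃ l, S l, f x = 0 := fun x hx =>
    let ⟨l, hl⟩ := mem_iUnion.mp hx; hfS l x hl
  refine ⟨⟨fun _ => f, χ, fun j => ⟨hf, hχ j⟩, hsum, fun _ => hfS', hχS⟩,
    fun j x => f x * χ j x, fun j => hf.mul (hχ j), hsum,
    fun j l x hx => by simp only [hfS l x hx, zero_mul], fun j => ?_⟩
  obtain ⟨W, -, hSW, hW⟩ := hχS j
  exact ⟨1, fun _ => f, fun _ => χ j, fun _ => ⟨hf, hχ j⟩,
    fun _ x hx => ⟨hfS j x hx, hW x (hSW hx)⟩, fun x => by simp⟩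

/-- Let `M` be a finite-dimensional real `C^∞` manifold (Hausdorff,
σ-compact, without boundary), `S_1, …, S_n` closed subsets, `U` open with `⋂ S_j ⊆ U`, and
`f` a smooth function vanishing on each `S_j` and on `U`.  Then `f = Σ_j a_j b_j` with `a_j`
smooth and vanishing on `S_1 ∪ ⋯ ∪ S_n` and `b_j` smooth and vanishing on an open
neighborhood of `S_j`; in particular `f ∈ Σ_j (I_N ∩ I(S_j)²)` where `I(S)` is the ideal of
smooth functions vanishing on `S` and `I_N = ⋂_l I(S_l)`. -/
theorem stmt_11 {d : ℕ} {M : Type*} [TopologicalSpace M]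
    [ChartedSpace (EuclideanSpace ℝ (Fin d)) M]
    [IsManifold (𝓡 d) (⊤ : ℕ∞) M] [T2Space M] [SigmaCompactSpace M]
    (n : ℕ) (hn : 1 ≤ n)
    (S : Fin n → Set M) (hcl : ∀ j, IsClosed (S j))
    (U : Set M) (hU : IsOpen U) (hsub : (⋂ j, S j) ⊆ U)
    (f : M → ℝ) (hf : ContMDiff (𝓡 d) 𝓘(ℝ, ℝ) (⊤ : ℕ∞) f)
    (hfS : ∀ j, ∀ x ∈ S j, f x = 0) (hfU : ∀ x ∈ U, f x = 0) :
    (∃ a b : Fin n → M → ℝ,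
      (∀ j, ContMDiff (𝓡 d) 𝓘(ℝ, ℝ) (⊤ : ℕ∞) (a j) ∧ ContMDiff (𝓡 d) 𝓘(ℝ, ℝ) (⊤ : ℕ∞) (b j)) ∧
      (∀ x, f x = ∑ j, a j x * b j x) ∧
      (∀ j, ∀ x ∈ ⋃ l, S l, a j x = 0) ∧
      (∀ j, ∃ W : Set M, IsOpen W ∧ S j ⊆ W ∧ ∀ x ∈ W, b j x = 0)) ∧
    (∃ u : Fin n → M → ℝ,
      (∀ j, ContMDiff (𝓡 d) 𝓘(ℝ, ℝ) (⊤ : ℕ∞) (u j)) ∧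
      (∀ x, f x = ∑ j, u j x) ∧
      (∀ j l, ∀ x ∈ S l, u j x = 0) ∧
      (∀ j, ∃ (mm : ℕ) (g h : Fin mm → M → ℝ),
        (∀ i, ContMDiff (𝓡 d) 𝓘(ℝ, ℝ) (⊤ : ℕ∞) (g i) ∧ ContMDiff (𝓡 d) 𝓘(ℝ, ℝ) (⊤ : ℕ∞) (h i)) ∧
        (∀ i, ∀ x ∈ S j, g i x = 0 ∧ h i x = 0) ∧
        (∀ x, u j x = ∑ i, g i x * h i x))) :=
  stmt_11_general n S hcl U hU hsub f hf hfS hfU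
end

section
/- Let (M, d) be a metric space, n ≥ 2, let S_1,…,S_n be nonempty closed subsets of M, and let U ⊆ M be open with ⋂_{j=1}^n S_j ⊆ U. For each j define U_j = {x ∈ M : dist(x, S_j) < max_{k ≠ j} dist(x, S_k)} and V_j = U_j ∪ U, where dist(x, S) denotes the infimum distance from x to S. Then each V_j is open, S_j ⊆ V_j for every j, and ⋂_{j=1}^n V_j = U. -/
/-! Statement 12: the open-cover construction in the proof of the localization lemma for the
higher-vanishing ideal. -/

open Metric

private lemma biSup_eq_sup' (t : Finset ℕ) (ht : t.Nonempty) (f : ℕ → ℝ)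
    (hf : ∀ l, 0 ≤ f l) : (⨆ l ∈ t, f l) = t.sup' ht f := by
  classical
  obtain ⟨a, ha⟩ := ht
  rw [Finset.ciSup_eq_max'_image f ⟨a, ha, by simp [Real.sSup_empty, hf a]⟩
      (Finset.image_nonempty.mpr ⟨a, ha⟩),
    Finset.max'_eq_sup', Finset.sup'_image]
  rfl

private lemma cont_sup' {M : Type*} [MetricSpace M] (t : Finset ℕ) (ht : t.Nonempty)
    (S : ℕ → Set M) :
    Continuous (fun x : M => t.sup' ht fun l => infDist x (S l)) := by
  rw [continuous_iff_continuousAt]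
  intro x
  exact Filter.Tendsto.finset_sup'_nhds_apply ht fun i _ => (continuous_infDist_pt (S i)).continuousAt

/-- Let `S_1, …, S_n` (`n ≥ 2`) be nonempty closed subsets of a metric space
`M` and `U` open with `⋂ S_j ⊆ U`.  With
`U_j = {x : dist(x, S_j) < max_{l ≠ j} dist(x, S_l)}` and `V_j = U_j ∪ U`, each `V_j` is open,
`S_j ⊆ V_j`, and `⋂_j V_j = U`. -/
theorem stmt_12 {M : Type*} [MetricSpace M] (n : ℕ) (hn : 2 ≤ n)
    (S : ℕ → Set M)
    (hne : ∀ j ∈ Finset.Icc 1 n, (S j).Nonempty)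
    (hcl : ∀ j ∈ Finset.Icc 1 n, IsClosed (S j))
    (U : Set M) (hU : IsOpen U)
    (hsub : (⋂ j ∈ Finset.Icc 1 n, S j) ⊆ U)
    (Uj : ℕ → Set M)
    (hUj : ∀ j, Uj j = {x : M | Metric.infDist x (S j) <
      ⨆ l ∈ (Finset.Icc 1 n).erase j, Metric.infDist x (S l)})
    (Vj : ℕ → Set M) (hVj : ∀ j, Vj j = Uj j ∪ U) :
    (∀ j ∈ Finset.Icc 1 n, IsOpen (Vj j)) ∧
    (∀ j ∈ Finset.Icc 1 n, S j ⊆ Vj j) ∧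
    (⋂ j ∈ Finset.Icc 1 n, Vj j) = U := by
  classical
  -- the erased set is nonempty for each j
  have hcard : (Finset.Icc 1 n).card = n := Nat.card_Icc 1 n ▸ by omega
  have herase : ∀ j, ((Finset.Icc 1 n).erase j).Nonempty := by
    intro j
    rw [← Finset.card_pos]
    have := Finset.pred_card_le_card_erase (s := Finset.Icc 1 n) (a := j)
    omega
  -- rewrite the biSup as a `sup'`
  have hUj' : ∀ j, Uj j = {x : M | infDist x (S j) <
      ((Finset.Icc 1 n).erase j).sup' (herase j) fun l => infDist x (S l)} := by
    intro j
    rw [hUj j]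
    ext x
    simp only [Set.mem_setOf_eq,
      biSup_eq_sup' _ (herase j) (fun l => infDist x (S l)) (fun l => infDist_nonneg)]
  refine ⟨?_, ?_, ?_⟩
  · -- openness
    intro j hj
    rw [hVj j, hUj' j]
    exact (isOpen_lt (continuous_infDist_pt (S j)) (cont_sup' _ (herase j) S)).union hU
  · -- S j ⊆ V j
    intro j hj x hx
    rw [hVj j]
    by_cases hall : ∀ l ∈ Finset.Icc 1 n, x ∈ S l
    · exact Or.inr (hsub (Set.mem_biInter hall))
    · push_neg at hall
      obtain ⟨l, hl, hxl⟩ := hall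
      have hlj : l ≠ j := fun h => hxl (h ▸ hx)
      have hle : l ∈ (Finset.Icc 1 n).erase j := Finset.mem_erase.2 ⟨hlj, hl⟩
      left
      rw [hUj' j]
      have h0 : infDist x (S j) = 0 := infDist_zero_of_mem hx
      have hpos : 0 < infDist x (S l) :=
        (hcl l hl).notMem_iff_infDist_pos (hne l hl) |>.mp hxl
      calc infDist x (S j) = 0 := h0
        _ < infDist x (S l) := hpos
        _ ≤ _ := Finset.le_sup' (fun l => infDist x (S l)) hle
  · -- intersection equals U
    apply Set.Subset.antisymm
    · intro x hx
      by_contra hxU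
      -- x is in every Uj
      have hxUj : ∀ j ∈ Finset.Icc 1 n, x ∈ Uj j := by
        intro j hj
        have := Set.mem_iInter₂.1 hx j hj
        rw [hVj j] at this
        exact this.resolve_right hxU
      -- take j maximizing infDist x (S j)
      have hne' : (Finset.Icc 1 n).Nonempty := ⟨1, by simp; omega⟩
      obtain ⟨j, hj, hjmax⟩ := Finset.exists_max_image (Finset.Icc 1 n)
        (fun l => infDist x (S l)) hne'
      have hmem := hxUj j hj
      rw [hUj' j] at hmem
      have hle : (((Finset.Icc 1 n).erase j).sup' (herase j) fun l => infDist x (S l))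
          ≤ infDist x (S j) := by
        apply Finset.sup'_le
        intro l hl
        exact hjmax l (Finset.mem_of_mem_erase hl)
      exact absurd (lt_of_lt_of_le hmem hle) (lt_irrefl _)
    · intro x hx
      refine Set.mem_iInter₂.2 fun j hj => ?_
      rw [hVj j]
      exact Or.inr hx
end

section
/- Fix n ≥ 1 and a type Λ of labels. A labeled ordered partition of {1,…,n} is a finite list ((α_1,ℓ_1),…,(α_s,ℓ_s)) where the α_t are nonempty pairwise disjoint subsets of {1,…,n} with α_1 ∪ ⋯ ∪ α_s = {1,…,n} and ℓ_t ∈ Λ. Let ∼ be the equivalence relation on labeled ordered partitions generated by: (i) ((α_t,ℓ_t))_{t=1}^s ∼ ((α_{θ(t)},ℓ_{θ(t)}))_{t=1}^s for every permutation θ of {1,…,s}; and (ii) whenever 1 ≤ k < n and no single block α_t contains both k and k+1, ((α_t,ℓ_t))_t ∼ ((τ_k(α_t),ℓ_t))_t, where τ_k is the transposition of k and k+1 applied elementwise to each block. Call an ordered partition (α_1,…,α_s) canonical if there are k_1 ≤ k_2 ≤ ⋯ ≤ k_s with k_1 + ⋯ + k_s = n and α_1 = {1,…,k_1}, α_2 =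 {k_1+1,…,k_1+k_2}, …, α_s = {n−k_s+1,…,n}. Then: every labeled ordered partition (P, L) is ∼-equivalent to a labeled ordered partition (P_λ, L') whose underlying ordered partition P_λ is canonical; moreover P_λ is unique, i.e. if (P, L) ∼ (P', L') and both underlying ordered partitions are canonical then P = P'. -/
/-- A list of labeled blocks: subsets of `{1,…,n}` (modelled as `Finset (Fin n)`) with labels. -/
abbrev LPart (n : ℕ) (Λ : Type*) := List (Finset (Fin n) × Λ)

/-- A labeled ordered partition of `{1,…,n}`: the blocks are nonempty, pairwise disjoint, and
their union is everything. -/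
def IsLabeledPartition {n : ℕ} {Λ : Type*} (l : LPart n Λ) : Prop :=
  (∀ p ∈ l, p.1.Nonempty) ∧ l.Pairwise (fun p q => Disjoint p.1 q.1) ∧
    l.foldr (fun p acc => p.1 ∪ acc) ∅ = Finset.univ

/-- Elementary moves generating the equivalence: (i) permuting the list of labeled blocks;
(ii) applying an allowed transposition `τ_k` of two consecutive labels `k, k+1` which do not
both lie in a single block, to every block. -/
inductive PMove (n : ℕ) (Λ : Type*) : LPart n Λ → LPart n Λ → Prop
  | perm (l₁ l₂ : LPart n Λ) (h : l₁.Perm l₂) : PMove n Λ l₁ l₂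
  | transp (l : LPart n Λ) (j : ℕ) (hj : j + 1 < n)
      (hallow : ∀ p ∈ l, ¬((⟨j, by omega⟩ : Fin n) ∈ p.1 ∧ (⟨j + 1, hj⟩ : Fin n) ∈ p.1)) :
      PMove n Λ l
        (l.map fun p =>
          (p.1.image (Equiv.swap (⟨j, by omega⟩ : Fin n) ⟨j + 1, hj⟩), p.2))

/-- The blocks of the canonical ordered partition with block sizes `ks`, starting at
offset `off`: consecutive intervals. -/
def canonicalBlocks (n : ℕ) : List ℕ → ℕ → List (Finset (Fin n))
  | [], _ => []
  | K :: ks, off =>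
      (Finset.univ.filter fun i : Fin n => off ≤ (i : ℕ) ∧ (i : ℕ) < off + K) ::
        canonicalBlocks n ks (off + K)

/-- An ordered partition is canonical if its blocks are the consecutive intervals determined by
a nondecreasing list of positive sizes summing to `n`. -/
def IsCanonical {n : ℕ} (l : List (Finset (Fin n))) : Prop :=
  ∃ ks : List ℕ, (∀ K ∈ ks, 0 < K) ∧ ks.Pairwise (· ≤ ·) ∧ ks.sum = n ∧
    l = canonicalBlocks n ks 0

/-! Sort the blocks by size with one permutation move. Write `c i` for the position of the
block containing `i`. While `c` has a descent `c (j + 1) < c j`, the points `j, j + 1` lie in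
different blocks, so `τ_j` is an allowed move; it swaps the values `c j, c (j + 1)` and so strictly
decreases `∑ i, c i * (n - i)`. Once `c` is monotone, every block is an interval, the blocks occur
from left to right, and their sizes are sorted: the partition is canonical. Uniqueness holds
because both kinds of moves preserve the multiset of block sizes, and a canonical partition is
determined by its sorted list of block sizes. -/

section

variable {n : ℕ} {Λ : Type*}

open Finset

lemma mem_foldr_union (l : LPart n Λ) (i : Fin n) :
    i ∈ l.foldr (fun p acc => p.1 ∪ acc) ∅ ↔ ∃ p ∈ l, i ∈ p.1 := by
  induction l with
  | nil => simp
  | cons q l ih => simp [ih]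

namespace IsLabeledPartition

lemma exists_mem {l : LPart n Λ} (hl : IsLabeledPartition l) (i : Fin n) : ∃ p ∈ l, i ∈ p.1 :=
  (mem_foldr_union l i).mp (hl.2.2 ▸ mem_univ i)

lemma perm {l l' : LPart n Λ} (hl : IsLabeledPartition l) (h : l.Perm l') :
    IsLabeledPartition l' := by
  refine ⟨fun p hp => hl.1 p (h.mem_iff.mpr hp), hl.2.1.perm h fun hpq => hpq.symm, ?_⟩
  ext i
  simp only [mem_univ, iff_true, mem_foldr_union, ← h.mem_iff]
  exact hl.exists_mem i

end IsLabeledPartition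

def applyPerm (e : Equiv.Perm (Fin n)) (l : LPart n Λ) : LPart n Λ :=
  l.map fun p => (p.1.image e, p.2)

lemma IsLabeledPartition.applyPerm {l : LPart n Λ} (hl : IsLabeledPartition l)
    (e : Equiv.Perm (Fin n)) : IsLabeledPartition (applyPerm e l) := by
  refine ⟨?_, ?_, ?_⟩
  · simp only [_root_.applyPerm, List.mem_map]
    rintro _ ⟨p, hp, rfl⟩
    exact (hl.1 p hp).image e
  · exact List.pairwise_map.mpr (hl.2.1.imp (disjoint_image e.injective).mpr)
  · ext i
    simp only [mem_univ, iff_true, mem_foldr_union, _root_.applyPerm, List.mem_map]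
    obtain ⟨p, hp, hip⟩ := hl.exists_mem (e.symm i)
    exact ⟨_, ⟨p, hp, rfl⟩, mem_image.mpr ⟨e.symm i, hip, e.apply_symm_apply i⟩⟩

lemma map_card_applyPerm (e : Equiv.Perm (Fin n)) (l : LPart n Λ) :
    ((applyPerm e l).map Prod.fst).map card = (l.map Prod.fst).map card := by
  simp [applyPerm, card_image_of_injective _ e.injective]

def blockIdx (l : LPart n Λ) (i : Fin n) : ℕ :=
  l.findIdx fun p => decide (i ∈ p.1)

lemma blockIdx_lt_length {l : LPart n Λ} (hl : IsLabeledPartition l) (i : Fin n) :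
    blockIdx l i < l.length := by
  obtain ⟨p, hp, hip⟩ := hl.exists_mem i
  exact List.findIdx_lt_length.mpr ⟨p, hp, by simpa using hip⟩

lemma blockIdx_eq_iff {l : LPart n Λ} (hl : IsLabeledPartition l) (i : Fin n) {t : ℕ}
    (ht : t < l.length) : blockIdx l i = t ↔ i ∈ l[t].1 := by
  have hmem : i ∈ (l[blockIdx l i]'(blockIdx_lt_length hl i)).1 := by
    simpa [blockIdx] using List.findIdx_getElem (p := fun p => decide (i ∈ p.1)) (xs := l)
  refine ⟨fun h => by simpa only [h] using hmem, fun hit => ?_⟩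
  rcases lt_trichotomy (blockIdx l i) t with h | h | h
  · exact absurd hit (disjoint_left.mp (List.pairwise_iff_getElem.mp hl.2.1 _ _ _ _ h) hmem)
  · exact h
  · simpa [hit] using List.not_of_lt_findIdx h

lemma blockIdx_eq_of_mem {l : LPart n Λ} (hl : IsLabeledPartition l) {p : Finset (Fin n) × Λ}
    (hp : p ∈ l) {i k : Fin n} (hi : i ∈ p.1) (hk : k ∈ p.1) : blockIdx l i = blockIdx l k := by
  obtain ⟨t, ht, rfl⟩ := List.getElem_of_mem hp
  rw [(blockIdx_eq_iff hl i ht).mpr hi, (blockIdx_eq_iff hl k ht).mpr hk]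

lemma blockIdx_applyPerm (e : Equiv.Perm (Fin n)) (l : LPart n Λ) (i : Fin n) :
    blockIdx (applyPerm e l) i = blockIdx l (e.symm i) := by
  simp only [blockIdx, applyPerm, List.findIdx_map]
  congr 1
  funext p
  simp only [Function.comp_apply, mem_image, decide_eq_decide]
  exact ⟨fun ⟨k, hk, hki⟩ => by simpa [← hki] using hk, fun h => ⟨_, h, e.apply_symm_apply i⟩⟩

lemma exists_adjacent_descent_of_not_monotone {α : Type*} [LinearOrder α] {f : Fin n → α}
    (h : ¬Monotone f) : ∃ j, ∃ hj : j + 1 < n, f ⟨j + 1, hj⟩ < f ⟨j, by omega⟩ := by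
  cases n with
  | zero => exact absurd (fun i => i.elim0) h
  | succ m =>
    rw [Fin.monotone_iff_le_succ] at h
    push Not at h
    obtain ⟨i, hi⟩ := h
    exact ⟨i, by omega, hi⟩

lemma sum_comp_swap_mul_lt (c : Fin n → ℕ) {a b : Fin n} (hab : (b : ℕ) = a + 1)
    (h : c b < c a) : ∑ i, c (Equiv.swap a b i) * (n - i) < ∑ i, c i * (n - i) := by
  have hne : a ≠ b := fun h => by simp [h] at hab
  have split : ∀ f : Fin n → ℕ, ∑ i, f i = ∑ i ∈ {a, b}ᶜ, f i + (f a + f b) := fun f => by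
    rw [← sum_pair hne, sum_compl_add_sum]
  rw [Fintype.sum_equiv (Equiv.swap a b) _ (fun i => c i * (n - Equiv.swap a b i))
    fun i => by rw [Equiv.swap_apply_self], split, split]
  simp only [Equiv.swap_apply_left, Equiv.swap_apply_right]
  have hrest : ∑ i ∈ {a, b}ᶜ, c i * (n - Equiv.swap a b i) = ∑ i ∈ {a, b}ᶜ, c i * (n - i) :=
    sum_congr rfl fun i hi => by
      simp only [mem_compl, mem_insert, mem_singleton, not_or] at hi
      rw [Equiv.swap_apply_of_ne_of_ne hi.1 hi.2]
  obtain ⟨m, hm⟩ : ∃ m, n - a = m + 1 := ⟨n - b, by omega⟩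
  rw [hrest, hm, show n - b = m by omega]
  nlinarith

theorem exists_eqvGen_monotone_blockIdx (l : LPart n Λ) (hl : IsLabeledPartition l) :
    ∃ l', IsLabeledPartition l' ∧ Relation.EqvGen (PMove n Λ) l l' ∧
      (l'.map Prod.fst).map card = (l.map Prod.fst).map card ∧ Monotone (blockIdx l') := by
  by_cases hmono : Monotone (blockIdx l)
  · exact ⟨l, hl, .refl l, rfl, hmono⟩
  obtain ⟨j, hj, hdesc⟩ := exists_adjacent_descent_of_not_monotone hmono
  set s := Equiv.swap (⟨j, by omega⟩ : Fin n) ⟨j + 1, hj⟩ with hs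
  have hallow : ∀ p ∈ l, ¬((⟨j, by omega⟩ : Fin n) ∈ p.1 ∧ (⟨j + 1, hj⟩ : Fin n) ∈ p.1) :=
    fun p hp ⟨ha, hb⟩ => hdesc.ne (blockIdx_eq_of_mem hl hp hb ha)
  have hdecr : ∑ i, blockIdx (applyPerm s l) i * (n - i) < ∑ i, blockIdx l i * (n - i) := by
    simpa only [blockIdx_applyPerm, hs, Equiv.symm_swap] using
      sum_comp_swap_mul_lt (blockIdx l) rfl hdesc
  obtain ⟨l', hl', hequiv, hcard, hmono'⟩ :=
    exists_eqvGen_monotone_blockIdx (applyPerm s l) (hl.applyPerm s)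
  exact ⟨l', hl', .trans _ _ _ (.rel _ _ (PMove.transp l j hj hallow)) hequiv,
    hcard.trans (map_card_applyPerm s l), hmono'⟩
termination_by ∑ i, blockIdx l i * (n - i)

lemma Fin.mem_iff_lt_card_of_isLowerSet {S : Finset (Fin n)} (hS : IsLowerSet (S : Set (Fin n)))
    (i : Fin n) : i ∈ S ↔ (i : ℕ) < S.card := by
  constructor
  · intro hi
    have := card_le_card fun k hk => hS (mem_Iic.mp hk) hi
    rw [Fin.card_Iic] at this
    omega
  · intro hi
    by_contra hni
    have := card_le_card fun k (hk : k ∈ S) =>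
      mem_Iio.mpr (lt_of_not_ge fun hik => hni (hS hik hk))
    rw [Fin.card_Iio] at this
    omega

lemma card_filter_blockIdx_lt {l : LPart n Λ} (hl : IsLabeledPartition l) {t : ℕ}
    (ht : t ≤ l.length) :
    #{i | blockIdx l i < t} = (((l.map Prod.fst).map card).take t).sum := by
  induction t with
  | zero => simp
  | succ t ih =>
    have hfib : (univ.filter fun i => blockIdx l i = t) = l[t].1 := by
      ext i
      simpa using blockIdx_eq_iff hl i (by omega : t < l.length)
    have hsplit : (univ.filter fun i => blockIdx l i < t + 1) =
        (univ.filter fun i => blockIdx l i < t) ∪ univ.filter fun i => blockIdx l i = t := by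
      ext i
      simp only [mem_filter, mem_univ, true_and, mem_union]
      omega
    rw [hsplit, card_union_of_disjoint (disjoint_filter.mpr fun _ _ h => h.ne), ih (by omega),
      hfib, List.sum_take_succ _ t (by simpa using ht)]
    simp

lemma length_canonicalBlocks (ks : List ℕ) (off : ℕ) :
    (canonicalBlocks n ks off).length = ks.length := by
  induction ks generalizing off with
  | nil => rfl
  | cons K ks ih => simp [canonicalBlocks, ih]

lemma getElem_canonicalBlocks (ks : List ℕ) (off t : ℕ) (ht : t < ks.length) :
    (canonicalBlocks n ks off)[t]'(by rwa [length_canonicalBlocks]) =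
      univ.filter fun i : Fin n =>
        off + (ks.take t).sum ≤ (i : ℕ) ∧ (i : ℕ) < off + (ks.take (t + 1)).sum := by
  induction ks generalizing off t with
  | nil => simp at ht
  | cons K ks ih =>
    cases t with
    | zero => simp [canonicalBlocks]
    | succ t =>
      simp only [canonicalBlocks, List.getElem_cons_succ]
      rw [ih (off + K) t (by simpa using ht)]
      ext i
      simp only [mem_filter, mem_univ, true_and]
      simp only [List.take_succ_cons, List.sum_cons]
      omega

lemma map_card_canonicalBlocks (ks : List ℕ) (off : ℕ) (h : off + ks.sum ≤ n) :
    (canonicalBlocks n ks off).map card = ks := by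
  induction ks generalizing off with
  | nil => rfl
  | cons K ks ih =>
    simp only [List.sum_cons] at h
    have hK : #{i : Fin n | off ≤ (i : ℕ) ∧ (i : ℕ) < off + K} = K := by
      have himage : (univ.filter fun i : Fin n => off ≤ (i : ℕ) ∧ (i : ℕ) < off + K).map
          Fin.valEmbedding = Ico off (off + K) := by
        ext m
        simp only [mem_map, mem_filter, mem_univ, true_and, Fin.valEmbedding_apply, mem_Ico]
        exact ⟨fun ⟨i, hi, him⟩ => him ▸ hi, fun hm => ⟨⟨m, by omega⟩, hm, rfl⟩⟩
      rw [← card_map Fin.valEmbedding, himage, Nat.card_Ico, Nat.add_sub_cancel_left]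
    simp only [canonicalBlocks, List.map_cons, hK, ih (off + K) (by omega)]

theorem isCanonical_of_monotone_blockIdx {l : LPart n Λ} (hl : IsLabeledPartition l)
    (hmono : Monotone (blockIdx l))
    (hsorted : ((l.map Prod.fst).map card).Pairwise (· ≤ ·)) :
    IsCanonical (l.map Prod.fst) := by
  set ks := (l.map Prod.fst).map card with hks
  have hlen : ks.length = l.length := by simp [hks]
  have hprefix : ∀ t ≤ l.length, ∀ i : Fin n, blockIdx l i < t ↔ (i : ℕ) < (ks.take t).sum := by
    intro t ht i
    rw [← card_filter_blockIdx_lt hl ht]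
    have hlower : IsLowerSet (↑(univ.filter fun i => blockIdx l i < t) : Set (Fin n)) :=
      fun i k hki hi => by simpa using (hmono hki).trans_lt (by simpa using hi)
    simpa using Fin.mem_iff_lt_card_of_isLowerSet hlower i
  have hsum : ks.sum = n := by
    have h := card_filter_blockIdx_lt hl le_rfl
    rwa [filter_true_of_mem fun i _ => blockIdx_lt_length hl i, card_univ, Fintype.card_fin,
      ← hlen, List.take_length, eq_comm] at h
  refine ⟨ks, ?_, hsorted, hsum, ?_⟩
  · simp only [hks, List.map_map, List.mem_map, Function.comp_apply]
    rintro _ ⟨p, hp, rfl⟩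
    exact card_pos.mpr (hl.1 p hp)
  · refine List.ext_getElem (by simp [length_canonicalBlocks, hlen]) fun t h₁ h₂ => ?_
    have ht : t < l.length := by simpa using h₁
    rw [getElem_canonicalBlocks ks 0 t (by omega)]
    ext i
    have h₁ := hprefix t ht.le i
    have h₂ := hprefix (t + 1) ht i
    simp only [List.getElem_map, mem_filter, mem_univ, true_and, zero_add,
      ← blockIdx_eq_iff hl i ht]
    omega

lemma exists_perm_pairwise_card (l : LPart n Λ) :
    ∃ l₀ : LPart n Λ, l.Perm l₀ ∧ ((l₀.map Prod.fst).map card).Pairwise (· ≤ ·) := by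
  refine ⟨l.mergeSort fun p q => decide (#p.1 ≤ #q.1), (List.mergeSort_perm _ _).symm, ?_⟩
  simp only [List.map_map, List.pairwise_map, Function.comp_apply]
  simpa using List.pairwise_mergeSort (le := fun p q : Finset (Fin n) × Λ => decide (#p.1 ≤ #q.1))
    (fun a b c hab hbc => by simp only [decide_eq_true_eq] at *; omega)
    (fun a b => by simp only [Bool.or_eq_true, decide_eq_true_eq]; omega) l

lemma perm_map_card_of_eqvGen {l₁ l₂ : LPart n Λ} (h : Relation.EqvGen (PMove n Λ) l₁ l₂) :
    ((l₁.map Prod.fst).map card).Perm ((l₂.map Prod.fst).map card) := by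
  induction h with
  | rel _ _ hmove =>
    cases hmove with
    | perm _ h => exact (h.map _).map _
    | transp _ _ _ => exact .of_eq (map_card_applyPerm _ _).symm
  | refl => exact .refl _
  | symm _ _ _ ih => exact ih.symm
  | trans _ _ _ _ _ ih₁ ih₂ => exact ih₁.trans ih₂

lemma IsCanonical.eq_of_perm_map_card {B₁ B₂ : List (Finset (Fin n))} (h₁ : IsCanonical B₁)
    (h₂ : IsCanonical B₂) (h : (B₁.map card).Perm (B₂.map card)) : B₁ = B₂ := by
  obtain ⟨ks₁, -, hs₁, hsum₁, rfl⟩ := h₁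
  obtain ⟨ks₂, -, hs₂, hsum₂, rfl⟩ := h₂
  rw [map_card_canonicalBlocks ks₁ 0 (by omega), map_card_canonicalBlocks ks₂ 0 (by omega)] at h
  rw [h.eq_of_pairwise' hs₁ hs₂]

end

theorem stmt_14_general (n : ℕ) (Λ : Type*) :
    (∀ l : LPart n Λ, IsLabeledPartition l →
      ∃ l' : LPart n Λ, IsLabeledPartition l' ∧ Relation.EqvGen (PMove n Λ) l l' ∧
        IsCanonical (l'.map Prod.fst)) ∧
    (∀ l₁ l₂ : LPart n Λ, IsLabeledPartition l₁ → IsLabeledPartition l₂ →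
      Relation.EqvGen (PMove n Λ) l₁ l₂ →
      IsCanonical (l₁.map Prod.fst) → IsCanonical (l₂.map Prod.fst) →
      l₁.map Prod.fst = l₂.map Prod.fst) := by
  refine ⟨fun l hl => ?_, fun l₁ l₂ _ _ h hc₁ hc₂ =>
    hc₁.eq_of_perm_map_card hc₂ (perm_map_card_of_eqvGen h)⟩
  obtain ⟨l₀, hperm, hsorted⟩ := exists_perm_pairwise_card l
  obtain ⟨l', hl', hequiv, hcard, hmono⟩ := exists_eqvGen_monotone_blockIdx l₀ (hl.perm hperm)
  exact ⟨l', hl', .trans _ _ _ (.rel _ _ (.perm l l₀ hperm)) hequiv,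
    isCanonical_of_monotone_blockIdx hl' hmono (hcard ▸ hsorted)⟩

/-- Every labeled ordered partition is equivalent (under the equivalence
generated by the moves) to one whose underlying ordered partition is canonical, and the
canonical representative of the underlying ordered partition is unique. -/
theorem stmt_14 (n : ℕ) (hn : 1 ≤ n) (Λ : Type*) :
    (∀ l : LPart n Λ, IsLabeledPartition l →
      ∃ l' : LPart n Λ, IsLabeledPartition l' ∧ Relation.EqvGen (PMove n Λ) l l' ∧
        IsCanonical (l'.map Prod.fst)) ∧
    (∀ l₁ l₂ : LPart n Λ, IsLabeledPartition l₁ → IsLabeledPartition l₂ →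
      Relation.EqvGen (PMove n Λ) l₁ l₂ →
      IsCanonical (l₁.map Prod.fst) → IsCanonical (l₂.map Prod.fst) →
      l₁.map Prod.fst = l₂.map Prod.fst) :=
  stmt_14_general n Λ
end

section
/- For all natural numbers n and k, the assignment sending a subset α ⊆ {1,…,n} with |α| = k to the function θ_α : {0,1,…,n} → {0,1,…,k} defined by θ_α(t) = |α ∩ {1,…,t}| is a bijection from the set of k-element subsets of {1,…,n} onto the set of monotone surjections {0,1,…,n} → {0,1,…,k}. -/
namespace Stmt15

variable {n : ℕ}

def cnt (α : Finset (Fin n)) (t : ℕ) : ℕ := (α.filter fun s : Fin n => (s : ℕ) < t).card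

lemma cnt_zero (α : Finset (Fin n)) : cnt α 0 = 0 := by simp [cnt]

lemma cnt_mono (α : Finset (Fin n)) {a b : ℕ} (hab : a ≤ b) : cnt α a ≤ cnt α b := by
  unfold cnt
  apply Finset.card_le_card
  intro x hx
  simp only [Finset.mem_filter] at hx ⊢
  exact ⟨hx.1, by omega⟩

lemma cnt_le_card (α : Finset (Fin n)) (t : ℕ) : cnt α t ≤ α.card :=
  Finset.card_le_card (Finset.filter_subset _ _)

lemma cnt_top (α : Finset (Fin n)) {t : ℕ} (h : n ≤ t) : cnt α t = α.card := by
  unfold cnt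
  rw [Finset.filter_true_of_mem (fun x _ => by have := x.isLt; omega)]

lemma cnt_succ (α : Finset (Fin n)) (t : ℕ) :
    cnt α (t + 1) = cnt α t + (α.filter fun s : Fin n => (s : ℕ) = t).card := by
  unfold cnt
  rw [← Finset.card_union_of_disjoint
      (s := α.filter fun s : Fin n => (s : ℕ) < t)
      (t := α.filter fun s : Fin n => (s : ℕ) = t)]
  · rw [← Finset.filter_or]
    congr 1
    apply Finset.filter_congr
    intro x _
    constructor <;> (intro; omega)
  · rw [Finset.disjoint_left]
    intro x hx hy
    simp only [Finset.mem_filter] at hx hy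
    omega

lemma cnt_step (α : Finset (Fin n)) (t : ℕ) :
    cnt α (t + 1) = cnt α t +
      (if h : t < n then (if (⟨t, h⟩ : Fin n) ∈ α then 1 else 0) else 0) := by
  rw [cnt_succ]
  congr 1
  by_cases h : t < n
  · simp only [dif_pos h]
    by_cases hm : (⟨t, h⟩ : Fin n) ∈ α
    · rw [if_pos hm,
        show (α.filter fun s : Fin n => (s : ℕ) = t) = {(⟨t, h⟩ : Fin n)} from ?_]
      · simp
      · ext x
        simp only [Finset.mem_filter, Finset.mem_singleton, Fin.ext_iff]
        exact ⟨fun h2 => h2.2, fun h2 => ⟨by cases x; simp_all, h2⟩⟩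
    · rw [if_neg hm,
        show (α.filter fun s : Fin n => (s : ℕ) = t) = ∅ from ?_]
      · simp
      · ext x
        simp only [Finset.mem_filter, Finset.notMem_empty, iff_false, not_and]
        intro hx hxt
        exact hm (by cases x; simp_all)
  · simp only [dif_neg h]
    rw [show (α.filter fun s : Fin n => (s : ℕ) = t) = ∅ from ?_]
    · simp
    · ext x
      simp only [Finset.mem_filter, Finset.notMem_empty, iff_false, not_and]
      intro hx hxt
      have := x.isLt; omega

lemma cnt_step_le (α : Finset (Fin n)) (t : ℕ) : cnt α (t + 1) ≤ cnt α t + 1 := by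
  rw [cnt_step]; split_ifs <;> omega

lemma mem_iff (α : Finset (Fin n)) {t : ℕ} (h : t < n) :
    (⟨t, h⟩ : Fin n) ∈ α ↔ cnt α (t + 1) = cnt α t + 1 := by
  rw [cnt_step, dif_pos h]
  split_ifs with hm <;> simp [hm]

lemma intermediate (α : Finset (Fin n)) (m : ℕ) :
    ∀ j ≤ cnt α m, ∃ t ≤ m, cnt α t = j := by
  induction m with
  | zero => intro j hj; exact ⟨0, le_rfl, by rw [cnt_zero] at hj ⊢; omega⟩
  | succ m ih =>
    intro j hj
    by_cases h : j ≤ cnt α m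
    · obtain ⟨t, ht, h2⟩ := ih j h
      exact ⟨t, by omega, h2⟩
    · have := cnt_step_le α m
      exact ⟨m + 1, le_rfl, by omega⟩

end Stmt15

open Stmt15 in
/-- Modelling the subsets of `{1,…,n}` as `Finset (Fin n)` (where `s : Fin n`
represents the label `s+1`, so that `|α ∩ {1,…,t}| = #{s ∈ α : (s : ℕ) < t}`), the assignment
`α ↦ θ_α` is a bijection from the `k`-element subsets onto the monotone surjections
`Fin (n+1) → Fin (k+1)`.  (The value is truncated by `min _ k` only to make the function
total; on the source set the truncation is the identity since there `#{s ∈ α : s < t} ≤ k`.) -/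
theorem stmt_15 (n k : ℕ) :
    Set.BijOn
      (fun (α : Finset (Fin n)) (t : Fin (n + 1)) =>
        (⟨min (α.filter fun s : Fin n => (s : ℕ) < (t : ℕ)).card k, by omega⟩ : Fin (k + 1)))
      {α : Finset (Fin n) | α.card = k}
      {f : Fin (n + 1) → Fin (k + 1) | Monotone f ∧ Function.Surjective f} := by
  have hθ : ∀ (α : Finset (Fin n)) (t : Fin (n + 1)),
      ((α.filter fun s : Fin n => (s : ℕ) < (t : ℕ)).card) = cnt α (t : ℕ) :=
    fun _ _ => rfl
  refine ⟨?_, ?_, ?_⟩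
  · -- MapsTo
    intro α hα
    simp only [Set.mem_setOf_eq] at hα ⊢
    constructor
    · intro a b hab
      simp only [Fin.mk_le_mk, hθ]
      have hab' : (a : ℕ) ≤ (b : ℕ) := hab
      exact min_le_min (cnt_mono α hab') le_rfl
    · intro j
      have hj : (j : ℕ) ≤ cnt α n := by
        rw [cnt_top α le_rfl, hα]; omega
      obtain ⟨t, ht, hcnt⟩ := intermediate α n (j : ℕ) hj
      refine ⟨⟨t, by omega⟩, ?_⟩
      apply Fin.ext
      show min ((α.filter fun s : Fin n => (s : ℕ) < ((⟨t, by omega⟩ : Fin (n+1)) : ℕ)).card) k = (j : ℕ)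
      rw [hθ α ⟨t, by omega⟩]
      simp only [Fin.val_mk]
      have hjk := j.is_le
      omega
  · -- InjOn
    intro α hα β hβ h
    simp only [Set.mem_setOf_eq] at hα hβ
    have hcnt : ∀ t : ℕ, t ≤ n → cnt α t = cnt β t := by
      intro t ht
      have h2 := congrArg Fin.val (congrFun h ⟨t, by omega⟩)
      simp only at h2
      rw [hθ α ⟨t, by omega⟩, hθ β ⟨t, by omega⟩] at h2
      simp only [Fin.val_mk] at h2
      have h3 : cnt α t ≤ k := hα ▸ cnt_le_card α t
      have h4 : cnt β t ≤ k := hβ ▸ cnt_le_card β t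
      omega
    ext s
    rw [show s = ⟨(s : ℕ), s.isLt⟩ from rfl, mem_iff α s.isLt, mem_iff β s.isLt,
      hcnt (s : ℕ) (by omega), hcnt ((s : ℕ) + 1) (by omega)]
  · -- SurjOn
    intro f hf
    obtain ⟨hmono, hsurj⟩ := hf
    have f0 : (f 0 : ℕ) = 0 := by
      obtain ⟨u, hu⟩ := hsurj 0
      have h1 : (f 0 : ℕ) ≤ (f u : ℕ) := hmono (Fin.zero_le u)
      have h2 : (f u : ℕ) = 0 := congrArg Fin.val hu
      omega
    have flast : (f (Fin.last n) : ℕ) = k := by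
      obtain ⟨u, hu⟩ := hsurj (Fin.last k)
      have h1 : (f u : ℕ) ≤ (f (Fin.last n) : ℕ) := hmono (Fin.le_last u)
      have h2 : (f u : ℕ) = k := congrArg Fin.val hu
      have h3 := (f (Fin.last n)).is_le
      omega
    have hstep : ∀ t : ℕ, (h1 : t + 1 ≤ n) →
        (f ⟨t + 1, by omega⟩ : ℕ) ≤ (f ⟨t, by omega⟩ : ℕ) + 1 := by
      intro t h1
      by_contra hc
      push_neg at hc
      have hv : (f ⟨t, by omega⟩ : ℕ) + 1 < k + 1 := by
        have := (f ⟨t + 1, by omega⟩).isLt; omega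
      obtain ⟨u, hu⟩ := hsurj ⟨(f ⟨t, by omega⟩ : ℕ) + 1, hv⟩
      have hu' : (f u : ℕ) = (f ⟨t, by omega⟩ : ℕ) + 1 := congrArg Fin.val hu
      rcases le_or_gt (u : ℕ) t with h | h
      · have h2 : u ≤ (⟨t, by omega⟩ : Fin (n + 1)) := by rw [Fin.le_def]; exact h
        have h3 : (f u : ℕ) ≤ (f ⟨t, by omega⟩ : ℕ) := hmono h2
        omega
      · have h2 : (⟨t + 1, by omega⟩ : Fin (n + 1)) ≤ u := by rw [Fin.le_def]; exact h
        have h3 : (f ⟨t + 1, by omega⟩ : ℕ) ≤ (f u : ℕ) := hmono h2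
        omega
    set α : Finset (Fin n) := Finset.univ.filter
      (fun s : Fin n => (f ⟨(s : ℕ) + 1, by omega⟩ : ℕ) ≠ (f ⟨(s : ℕ), by omega⟩ : ℕ))
      with hαdef
    have claim : ∀ t : ℕ, (ht : t ≤ n) → cnt α t = (f ⟨t, by omega⟩ : ℕ) := by
      intro t
      induction t with
      | zero =>
        intro _
        rw [cnt_zero]
        rw [show (⟨0, by omega⟩ : Fin (n + 1)) = 0 from rfl]
        exact f0.symm
      | succ t ih =>
        intro ht
        have ht' : t ≤ n := by omega
        have hmle : (f ⟨t, by omega⟩ : ℕ) ≤ (f ⟨t + 1, by omega⟩ : ℕ) := by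
          apply hmono
          rw [Fin.le_def]
          simp
        have hsle := hstep t ht
        rw [cnt_step, dif_pos (show t < n by omega), ih ht']
        by_cases hm : (⟨t, by omega⟩ : Fin n) ∈ α
        · rw [if_pos hm]
          have hne : (f ⟨t + 1, by omega⟩ : ℕ) ≠ (f ⟨t, by omega⟩ : ℕ) :=
            (Finset.mem_filter.mp hm).2
          omega
        · rw [if_neg hm]
          have heq : (f ⟨t + 1, by omega⟩ : ℕ) = (f ⟨t, by omega⟩ : ℕ) := by
            by_contra hc
            exact hm (Finset.mem_filter.mpr ⟨Finset.mem_univ _, hc⟩)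
          omega
    have hcard : α.card = k := by
      have h1 := claim n le_rfl
      rw [cnt_top α le_rfl] at h1
      rw [h1]
      exact flast
    refine ⟨α, hcard, ?_⟩
    funext t
    apply Fin.ext
    show min ((α.filter fun s : Fin n => (s : ℕ) < (t : ℕ)).card) k = (f t : ℕ)
    rw [hθ α t]
    have h1 := claim (t : ℕ) (by omega)
    rw [Fin.eta] at h1
    have h2 := (f t).is_le
    omega
end

section
/- For n ≥ 0 let Λ_n be the exterior algebra over ℝ on generators ε_0,…,ε_n, and for 0 ≤ j ≤ n−1 let s^j : Λ_n → Λ_{n−1} be the ℝ-algebra homomorphism with s^j(ε_k) = ε_k for k ≤ j and s^j(ε_k) = ε_{k−1} for k > j. Then for every n ≥ 1 and 1 ≤ j ≤ n, the kernel of s^{j−1} : Λ_n → Λ_{n−1} equals the two-sided ideal of Λ_n generated by ε_j − ε_{j−1}, and the product of any two elements of this kernel is zero. -/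
/-! Statement 16: in the exterior algebra `Λ_n` on generators `ε_0, …, ε_n`, the kernel of the
codegeneracy `s^{j-1} : Λ_n → Λ_{n-1}` is the two-sided ideal generated by `ε_j - ε_{j-1}`,
and the product of any two elements of this kernel is zero. -/

noncomputable section

/-- `Λ_n`: the exterior algebra over `ℝ` on the generators `ε_0, …, ε_n`. -/
abbrev Lam (n : ℕ) := ExteriorAlgebra ℝ (Fin (n + 1) → ℝ)

/-- The generator `ε_i ∈ Λ_n`. -/
def eps (n : ℕ) (i : Fin (n + 1)) : Lam n := ExteriorAlgebra.ι ℝ (Pi.single i 1)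

/-- The algebra homomorphism `Λ_a → Λ_b` sending `ε_i ↦ ε_{g i}`. -/
def genMap {a b : ℕ} (g : Fin (a + 1) → Fin (b + 1)) : Lam a →ₐ[ℝ] Lam b :=
  ExteriorAlgebra.lift ℝ
    ⟨(ExteriorAlgebra.ι ℝ).comp
        (∑ i : Fin (a + 1),
          (LinearMap.single ℝ (fun _ : Fin (b + 1) => ℝ) (g i)).comp (LinearMap.proj i)),
      fun m => ExteriorAlgebra.ι_sq_zero _⟩

/-- The codegeneracy `s^j : Λ_{m+1} → Λ_m` (`0 ≤ j ≤ m`): `s^j(ε_i) = ε_i` for `i ≤ j` and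
`s^j(ε_i) = ε_{i-1}` for `i > j`. -/
def sdeg (m : ℕ) (j : Fin (m + 1)) : Lam (m + 1) →ₐ[ℝ] Lam m :=
  genMap (fun i : Fin (m + 2) => Fin.predAbove j i)

lemma genMap_ι {a b : ℕ} (g : Fin (a+1) → Fin (b+1)) (v : Fin (a+1) → ℝ) :
    genMap g (ExteriorAlgebra.ι ℝ v) = ExteriorAlgebra.ι ℝ (∑ i, Pi.single (g i) (v i)) := by
  simp [genMap, ExteriorAlgebra.lift_ι_apply, LinearMap.sum_apply, Pi.single]

lemma genMap_eps {a b : ℕ} (g : Fin (a+1) → Fin (b+1)) (i : Fin (a+1)) :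
    genMap g (eps a i) = eps b (g i) := by
  rw [eps, genMap_ι, eps]
  congr 1
  ext k
  rw [Finset.sum_apply,
    Finset.sum_eq_single i (fun x _ hx => by simp [Pi.single_apply, hx]) (by simp)]
  simp

lemma predAbove_val' {m : ℕ} (p : Fin (m+1)) (i : Fin (m+2)) :
    (Fin.predAbove p i).val = if p.val < i.val then i.val - 1 else i.val := by
  rw [Fin.predAbove]
  split_ifs with h1 h2 h3
  · simp
  · rw [Fin.lt_def, Fin.coe_castSucc] at h1; omega
  · rw [Fin.lt_def, Fin.coe_castSucc] at h1; omega
  · simp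

lemma succAbove_val' {m : ℕ} (q : Fin (m+2)) (k : Fin (m+1)) :
    (Fin.succAbove q k).val = if k.val < q.val then k.val else k.val + 1 := by
  rw [Fin.succAbove]
  split_ifs with h1 h2 h3
  · simp
  · rw [Fin.lt_def, Fin.coe_castSucc] at h1; omega
  · rw [Fin.lt_def, Fin.coe_castSucc] at h1; omega
  · simp

lemma hcomp_aux {m : ℕ} (p : Fin (m+1)) (q q' : Fin (m+2))
    (hq : q.val = p.val + 1) (hq' : q'.val = p.val) (i : Fin (m+2)) :
    Fin.succAbove q (Fin.predAbove p i) = if i = q then q' else i := by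
  apply Fin.ext
  rcases eq_or_ne i q with h | h
  · rw [if_pos h, h, succAbove_val', predAbove_val']
    split_ifs <;> omega
  · rw [if_neg h, succAbove_val', predAbove_val']
    have : i.val ≠ q.val := fun hc => h (Fin.ext hc)
    split_ifs <;> omega

lemma predAbove_eq_aux {m : ℕ} (p : Fin (m+1)) (q q' : Fin (m+2))
    (hq : q.val = p.val + 1) (hq' : q'.val = p.val) :
    Fin.predAbove p q = Fin.predAbove p q' := by
  apply Fin.ext
  rw [predAbove_val', predAbove_val']
  split_ifs <;> omega

set_option maxHeartbeats 2000000 in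
theorem aux_main (m : ℕ) (p : Fin (m+1)) (q q' : Fin (m+2))
    (hq : q.val = p.val + 1) (hq' : q'.val = p.val) :
    (∀ x : Lam (m + 1), sdeg m p x = 0 ↔
      x ∈ TwoSidedIdeal.span {eps (m + 1) q - eps (m + 1) q'}) ∧
    (∀ a b : Lam (m + 1), sdeg m p a = 0 → sdeg m p b = 0 → a * b = 0) := by
  set d : Lam (m+1) := eps (m+1) q - eps (m+1) q' with hd_def
  set s := sdeg m p with hs_def
  set σ : Lam m →ₐ[ℝ] Lam (m+1) := genMap (Fin.succAbove q) with hσ_def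
  set I := TwoSidedIdeal.span {d} with hI_def
  set u : Fin (m+2) → ℝ := Pi.single q 1 - Pi.single q' 1 with hu_def
  have hdι : d = ExteriorAlgebra.ι ℝ u := by rw [hd_def, hu_def, map_sub, eps, eps]
  have hdd : d * d = 0 := by rw [hdι]; exact ExteriorAlgebra.ι_sq_zero u
  have hdI : d ∈ I := TwoSidedIdeal.subset_span rfl
  have hsd : s d = 0 := by
    rw [hd_def, hs_def, map_sub, sdeg, genMap_eps, genMap_eps,
      predAbove_eq_aux p q q' hq hq', sub_self]
  have hse : ∀ i, s (eps (m+1) i) = eps m (Fin.predAbove p i) := fun i => by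
    rw [hs_def, sdeg, genMap_eps]
  have hσe : ∀ k, σ (eps m k) = eps (m+1) (Fin.succAbove q k) := fun k => by
    rw [hσ_def, genMap_eps]
  -- key: x - σ (s x) ∈ I
  have key : ∀ x : Lam (m+1), x - σ (s x) ∈ I := by
    intro x
    induction x using ExteriorAlgebra.induction with
    | algebraMap r => rw [AlgHom.commutes, AlgHom.commutes, sub_self]; exact I.zero_mem
    | add x y hx hy =>
        have h : x + y - σ (s (x + y)) = (x - σ (s x)) + (y - σ (s y)) := by
          rw [map_add, map_add]; abel
        rw [h]; exact I.add_mem hx hy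
    | mul x y hx hy =>
        have h : x * y - σ (s (x * y)) =
            x * (y - σ (s y)) + (x - σ (s x)) * σ (s y) := by
          rw [map_mul, map_mul]; noncomm_ring
        rw [h]
        exact I.add_mem (I.mul_mem_left _ _ hy) (I.mul_mem_right _ _ hx)
    | ι v =>
        have hv : (ExteriorAlgebra.ι ℝ v : Lam (m+1)) = ∑ i, v i • eps (m+1) i := by
          have h1 : v = ∑ i, v i • (Pi.single i 1 : Fin (m+2) → ℝ) := by
            ext k; simp [Pi.single_apply, mul_comm]
          conv_lhs => rw [h1]
          rw [map_sum]
          simp [eps]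
        have h2 : (ExteriorAlgebra.ι ℝ v : Lam (m+1)) - σ (s (ExteriorAlgebra.ι ℝ v)) =
            ∑ i, v i • (eps (m+1) i - σ (s (eps (m+1) i))) := by
          rw [hv, map_sum, map_sum, ← Finset.sum_sub_distrib]
          congr 1
          ext i
          rw [map_smul, map_smul, smul_sub]
        rw [h2]
        refine Finset.sum_induction _ (· ∈ I) (fun a b ha hb => I.add_mem ha hb)
          I.zero_mem (fun i _ => ?_)
        rw [hse, hσe, hcomp_aux p q q' hq hq' i]
        rcases eq_or_ne i q with h | h
        · rw [if_pos h, h, ← hd_def, Algebra.smul_def]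
          exact I.mul_mem_left _ _ hdI
        · rw [if_neg h, sub_self, smul_zero]
          exact I.zero_mem
  have part1 : ∀ x : Lam (m+1), s x = 0 ↔ x ∈ I := by
    intro x
    constructor
    · intro hx
      have := key x
      rwa [hx, map_zero, sub_zero] at this
    · intro hx
      have h0 : ∀ z, z ∈ TwoSidedIdeal.mk' {x : Lam (m+1) | s x = 0}
          (show s 0 = 0 from map_zero s)
          (fun {a b} ha hb => show s (a + b) = 0 by rw [map_add, ha, hb, add_zero])
          (fun {a} ha => show s (-a) = 0 by rw [map_neg, ha, neg_zero])
          (fun {a b} hb => show s (a * b) = 0 by rw [map_mul, hb, mul_zero])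
          (fun {a b} ha => show s (a * b) = 0 by rw [map_mul, ha, zero_mul])
          ↔ s z = 0 := fun z => TwoSidedIdeal.mem_mk' _ _ _ _ _ _ z
      rw [← h0]
      refine TwoSidedIdeal.mem_span_iff.mp hx _ ?_
      rintro z rfl
      rw [SetLike.mem_coe, h0]
      exact hsd
  -- commutation
  have comm : ∀ c : Lam (m+1), ∃ c', c * d = d * c' ∧ d * c = c' * d := by
    intro c
    induction c using ExteriorAlgebra.induction with
    | algebraMap r =>
        exact ⟨algebraMap ℝ _ r, (Algebra.commutes r d), (Algebra.commutes r d).symm⟩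
    | ι w =>
        refine ⟨-ExteriorAlgebra.ι ℝ w, ?_, ?_⟩
        · rw [hdι, mul_neg]
          exact eq_neg_of_add_eq_zero_left (ExteriorAlgebra.ι_add_mul_swap w u)
        · rw [hdι, neg_mul]
          exact eq_neg_of_add_eq_zero_left (ExteriorAlgebra.ι_add_mul_swap u w)
    | mul x y hx hy =>
        obtain ⟨x', hx1, hx2⟩ := hx
        obtain ⟨y', hy1, hy2⟩ := hy
        exact ⟨x' * y',
          by rw [mul_assoc, hy1, ← mul_assoc, hx1, mul_assoc],
          by rw [← mul_assoc, hx2, mul_assoc, hy2, ← mul_assoc]⟩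
    | add x y hx hy =>
        obtain ⟨x', hx1, hx2⟩ := hx
        obtain ⟨y', hy1, hy2⟩ := hy
        exact ⟨x' + y',
          by rw [add_mul, mul_add, hx1, hy1],
          by rw [mul_add, add_mul, hx2, hy2]⟩
  -- factorization
  have factor : ∀ x ∈ I, (∃ y, x = d * y) ∧ (∃ z, x = z * d) := by
    have hS : ∀ x, x ∈ TwoSidedIdeal.mk'
        {x : Lam (m+1) | (∃ y, x = d * y) ∧ (∃ z, x = z * d)}
        ⟨⟨0, (mul_zero d).symm⟩, ⟨0, (zero_mul d).symm⟩⟩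
        (fun {a b} ha hb => ⟨⟨ha.1.choose + hb.1.choose, by
            rw [mul_add, ← ha.1.choose_spec, ← hb.1.choose_spec]⟩,
          ⟨ha.2.choose + hb.2.choose, by
            rw [add_mul, ← ha.2.choose_spec, ← hb.2.choose_spec]⟩⟩)
        (fun {a} ha => ⟨⟨-ha.1.choose, by rw [mul_neg, ← ha.1.choose_spec]⟩,
          ⟨-ha.2.choose, by rw [neg_mul, ← ha.2.choose_spec]⟩⟩)
        (fun {c a} ha => by
          obtain ⟨⟨y, hy⟩, ⟨z, hz⟩⟩ := ha
          obtain ⟨c', hc1, hc2⟩ := comm c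
          exact ⟨⟨c' * y, by rw [hy, ← mul_assoc, hc1, mul_assoc]⟩,
            ⟨c * z, by rw [hz, mul_assoc]⟩⟩)
        (fun {a c} ha => by
          obtain ⟨⟨y, hy⟩, ⟨z, hz⟩⟩ := ha
          obtain ⟨c', hc1, hc2⟩ := comm c
          exact ⟨⟨y * c, by rw [hy, mul_assoc]⟩,
            ⟨z * c', by rw [hz, mul_assoc, hc2, ← mul_assoc]⟩⟩)
        ↔ (∃ y, x = d * y) ∧ (∃ z, x = z * d) := fun x =>
      TwoSidedIdeal.mem_mk' _ _ _ _ _ _ x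
    intro x hx
    rw [← hS]
    refine TwoSidedIdeal.mem_span_iff.mp hx _ ?_
    rintro z rfl
    rw [SetLike.mem_coe, hS]
    exact ⟨⟨1, (mul_one d).symm⟩, ⟨1, (one_mul d).symm⟩⟩
  refine ⟨part1, fun a b ha hb => ?_⟩
  obtain ⟨-, ⟨z, hz⟩⟩ := factor a ((part1 a).mp ha)
  obtain ⟨⟨y, hy⟩, -⟩ := factor b ((part1 b).mp hb)
  rw [hz, hy, mul_assoc, ← mul_assoc d, hdd, zero_mul, mul_zero]

/-- For `n = m + 1 ≥ 1` and `1 ≤ j ≤ n`, the kernel of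
`s^{j-1} : Λ_n → Λ_{n-1}` is the two-sided ideal of `Λ_n` generated by `ε_j - ε_{j-1}`,
and the product of any two elements of this kernel vanishes. -/
theorem stmt_16 (m : ℕ) (j : ℕ) (hj1 : 1 ≤ j) (hjn : j ≤ m + 1) :
    (∀ x : Lam (m + 1), sdeg m ⟨j - 1, by omega⟩ x = 0 ↔
      x ∈ TwoSidedIdeal.span
        {eps (m + 1) ⟨j, by omega⟩ - eps (m + 1) ⟨j - 1, by omega⟩}) ∧
    (∀ a b : Lam (m + 1),
      sdeg m ⟨j - 1, by omega⟩ a = 0 → sdeg m ⟨j - 1, by omega⟩ b = 0 → a * b = 0) :=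
  aux_main m ⟨j - 1, by omega⟩ ⟨j, by omega⟩ ⟨j - 1, by omega⟩ (by simp; omega) rfl
end
end

section
/- For n, p, q ≥ 0, in the exterior algebras Λ_n over ℝ on generators ε_0,…,ε_n, with cofaces d^i : Λ_{n−1} → Λ_n the ℝ-algebra homomorphisms given by d^i(ε_k) = ε_k for k < i and d^i(ε_k) = ε_{k+1} for k ≥ i, and with Δ_n = (ε_1 − ε_0)⋯(ε_n − ε_{n−1}), π_n = ε_0⋯ε_n, and cup product f ∪ g = (d^{p+1})^q(f) · (d^0)^p(g) for f ∈ Λ_p, g ∈ Λ_q, the following identities hold: (1) ε_i · Δ_n = π_n for every 0 ≤ i ≤ n; (2) Σ_{i=0}^{n} (−1)^i d^i(π_{n−1}) = Δ_n for every n ≥ 1; (3) Δ_p ∪ Δ_q = Δ_{p+q}; (4) π_p ∪ Δ_q = π_{p+q}; (5) π_p ∪ π_q = 0. -/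
/-!
A vector times an exterior product in which it already occurs is zero. Since `ε_i - ε_0` is a
sum of factors of `Δ_n`, this gives `ε_i Δ_n = ε_0 Δ_n`, and `ε_0 Δ_n = π_n` because
`ε_0 ⋯ ε_k (ε_{k+1} - ε_k) = ε_0 ⋯ ε_{k+1}`. Multiplying out `Δ_n` factor by factor gives
`Δ_n = Σ_i (-1)^i ε_0 ⋯ ε̂_i ⋯ ε_n`, and `ε_0 ⋯ ε̂_i ⋯ ε_n` is `d^i(π_{n-1})`.
In the cup product, `(d^{p+1})^q` is the inclusion `ε_k ↦ ε_k` and `(d^0)^p` is the shift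
`ε_k ↦ ε_{k+p}`, so `Δ_p ∪ Δ_q` and `π_p ∪ Δ_q` are again products of the two kinds above,
while `π_p ∪ π_q` contains `ε_p` twice.
-/

noncomputable section

/-- `Δ_n = (ε_1 - ε_0)(ε_2 - ε_1) ⋯ (ε_n - ε_{n-1}) ∈ Λ_n`. -/
def Delta (n : ℕ) : Lam n :=
  ((List.finRange n).map (fun i : Fin n => eps n i.succ - eps n i.castSucc)).prod

/-- `π_n = ε_0 ε_1 ⋯ ε_n ∈ Λ_n`. -/
def piTop (n : ℕ) : Lam n :=
  ((List.finRange (n + 1)).map (fun i => eps n i)).prod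

/-- The coface `d^i : Λ_n → Λ_{n+1}`: `d^i(ε_l) = ε_l` for `l < i` and `ε_{l+1}` for `l ≥ i`. -/
def dcoface (n : ℕ) (i : Fin (n + 2)) : Lam n →ₐ[ℝ] Lam (n + 1) :=
  genMap (fun l : Fin (n + 1) => Fin.succAbove i l)

/-- The iterate `(d^i)^q : Λ_p → Λ_{p+q}` (the coface index `i` is fixed; it is clamped into
range, which does not affect the values used below since there `i ≤ p + 1`). -/
def dIter (i : ℕ) : (p q : ℕ) → Lam p → Lam (p + q)
  | _, 0, x => x
  | p, q + 1, x => dcoface (p + q) ⟨min i (p + q + 1), by omega⟩ (dIter i p q x)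

/-- Cast along an equality of degrees. -/
def lcast {a b : ℕ} (h : a = b) (x : Lam a) : Lam b := h ▸ x

/-- The cup product `f ∪ g = (d^{p+1})^q(f) · (d^0)^p(g)` for `f ∈ Λ_p`, `g ∈ Λ_q`. -/
def cup (p q : ℕ) (f : Lam p) (g : Lam q) : Lam (p + q) :=
  dIter (p + 1) p q f * lcast (Nat.add_comm q p) (dIter 0 q p g)

namespace ExteriorAlgebra

variable {R M : Type*} [CommRing R] [AddCommGroup M] [Module R M]

theorem list_prod_map_ι_eq_zero {l : List M} (hl : ¬ l.Nodup) : (l.map (ι R)).prod = 0 := by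
  have hv : ¬ Function.Injective l.get := by rwa [← List.nodup_iff_injective_get]
  have := ιMulti_eq_zero_of_not_inj (R := R) hv
  rwa [ιMulti_apply, List.ofFn_comp', List.ofFn_get] at this

theorem ι_mul_list_prod_map_ι {m : M} {l : List M} (h : m ∈ l) :
    ι R m * (l.map (ι R)).prod = 0 := by
  rw [← List.prod_cons, ← List.map_cons]
  exact list_prod_map_ι_eq_zero (List.not_nodup_cons_of_mem h)

end ExteriorAlgebra

open ExteriorAlgebra

theorem genMap_ι_single {a b : ℕ} (g : Fin (a + 1) → Fin (b + 1)) (i : Fin (a + 1)) (x : ℝ) :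
    genMap g (ι ℝ (Pi.single i x)) = ι ℝ (Pi.single (g i) x) := by
  rw [genMap, lift_ι_apply]
  simp [Pi.single_apply, apply_ite, Finset.sum_ite_eq']

theorem genMap_id {a : ℕ} (x : Lam a) : genMap id x = x := by
  rw [← AlgHom.id_apply (R := ℝ) x]
  congr 1
  refine hom_ext (LinearMap.pi_ext fun i x => ?_)
  simp [genMap_ι_single]

theorem genMap_genMap {a b c : ℕ} (g : Fin (b + 1) → Fin (c + 1)) (h : Fin (a + 1) → Fin (b + 1))
    (x : Lam a) : genMap g (genMap h x) = genMap (g ∘ h) x := by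
  rw [← AlgHom.comp_apply]
  congr 1
  refine hom_ext (LinearMap.pi_ext fun i x => ?_)
  simp [genMap_ι_single]

theorem dIter_succ_self (p q : ℕ) (x : Lam p) :
    dIter (p + 1) p q x = genMap (Fin.castLE (by omega)) x := by
  induction q with
  | zero => exact (genMap_id x).symm
  | succ q ih =>
    rw [dIter, ih, dcoface, genMap_genMap]
    congr 2
    funext k
    ext
    simp [Fin.succAbove, Fin.lt_def, Nat.lt_succ_iff.mp k.is_lt]

theorem dIter_zero (q p : ℕ) (x : Lam q) :
    dIter 0 q p x = genMap (fun k => ⟨k + p, by omega⟩) x := by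
  induction p with
  | zero => exact (genMap_id x).symm
  | succ p ih =>
    rw [dIter, ih, dcoface, genMap_genMap]
    -- `Fin.succAbove 0` is `Fin.succ` by definition
    rfl

theorem lcast_genMap {a b c : ℕ} (h : b = c) (g : Fin (a + 1) → Fin (b + 1)) (x : Lam a) :
    lcast h (genMap g x) = genMap (fun k => Fin.cast (by omega) (g k)) x := by
  subst h
  rfl

theorem cup_eq (p q : ℕ) (f : Lam p) (g : Lam q) :
    cup p q f g =
      genMap (b := p + q) (Fin.castLE (by omega)) f * genMap (b := p + q) (Fin.natAdd p) g := by
  rw [cup, dIter_succ_self, dIter_zero, lcast_genMap]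
  congr 3
  funext k
  ext
  simp [add_comm]

/-- `ℕ`-indexed standard basis vector of `Fin (n + 1) → ℝ` (zero for `j > n`). -/
def natSingle (n j : ℕ) : Fin (n + 1) → ℝ := fun t => if (t : ℕ) = j then 1 else 0

def epsNat (n j : ℕ) : Lam n := ι ℝ (natSingle n j)

def epsProd (n : ℕ) (l : List ℕ) : Lam n := (l.map (epsNat n)).prod

def deltaFrom (n s k : ℕ) : Lam n :=
  ((List.range k).map fun j => epsNat n (s + j + 1) - epsNat n (s + j)).prod

theorem eps_eq_epsNat (n : ℕ) (i : Fin (n + 1)) : eps n i = epsNat n i := by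
  rw [eps, epsNat]
  congr 1
  ext t
  simp [natSingle, Pi.single_apply, Fin.ext_iff]

theorem piTop_eq_epsProd (n : ℕ) : piTop n = epsProd n (List.range (n + 1)) := by
  rw [piTop, epsProd, ← List.map_coe_finRange_eq_range, List.map_map]
  exact congrArg List.prod (List.map_congr_left fun i _ => eps_eq_epsNat n i)

theorem Delta_eq_deltaFrom (n : ℕ) : Delta n = deltaFrom n 0 n := by
  rw [Delta, deltaFrom, ← List.map_coe_finRange_eq_range, List.map_map]
  refine congrArg List.prod (List.map_congr_left fun i _ => ?_)
  simp [eps_eq_epsNat]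

theorem genMap_epsNat {a b : ℕ} (g : Fin (a + 1) → Fin (b + 1)) (G : ℕ → ℕ)
    (hG : ∀ k : Fin (a + 1), (g k : ℕ) = G k) {j : ℕ} (hj : j ≤ a) :
    genMap g (epsNat a j) = epsNat b (G j) := by
  obtain ⟨k, rfl⟩ : ∃ k : Fin (a + 1), (k : ℕ) = j := ⟨⟨j, by omega⟩, rfl⟩
  rw [← hG, ← eps_eq_epsNat, ← eps_eq_epsNat, eps, eps, genMap_ι_single]

theorem genMap_piTop {a b : ℕ} (g : Fin (a + 1) → Fin (b + 1)) (G : ℕ → ℕ)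
    (hG : ∀ k : Fin (a + 1), (g k : ℕ) = G k) :
    genMap g (piTop a) = epsProd b ((List.range (a + 1)).map G) := by
  rw [piTop_eq_epsProd, epsProd, epsProd, map_list_prod, List.map_map, List.map_map]
  refine congrArg List.prod (List.map_congr_left fun j hj => ?_)
  exact genMap_epsNat g G hG (Nat.lt_succ_iff.mp (List.mem_range.mp hj))

theorem genMap_Delta {a b : ℕ} (g : Fin (a + 1) → Fin (b + 1)) (t : ℕ)
    (hg : ∀ k : Fin (a + 1), (g k : ℕ) = t + k) :
    genMap g (Delta a) = deltaFrom b t a := by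
  rw [Delta_eq_deltaFrom, deltaFrom, deltaFrom, map_list_prod, List.map_map]
  refine congrArg List.prod (List.map_congr_left fun j hj => ?_)
  have hj : j < a := List.mem_range.mp hj
  rw [Function.comp_apply, map_sub, genMap_epsNat g (t + ·) hg (by omega),
    genMap_epsNat g (t + ·) hg (by omega)]
  congr 2 <;> omega

theorem epsProd_append (n : ℕ) (l₁ l₂ : List ℕ) :
    epsProd n (l₁ ++ l₂) = epsProd n l₁ * epsProd n l₂ := by
  simp [epsProd]

theorem epsProd_concat (n : ℕ) (l : List ℕ) (j : ℕ) :
    epsProd n (l ++ [j]) = epsProd n l * epsNat n j := by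
  simp [epsProd]

theorem epsProd_eq_zero {n : ℕ} {l : List ℕ} (hl : ¬ l.Nodup) : epsProd n l = 0 := by
  rw [epsProd, show epsNat n = ι ℝ ∘ natSingle n from rfl, ← List.map_map]
  exact list_prod_map_ι_eq_zero fun h => hl (h.of_map _)

theorem epsProd_mul_epsNat_of_mem {n j : ℕ} {l : List ℕ} (h : j ∈ l) :
    epsProd n l * epsNat n j = 0 := by
  rw [← epsProd_concat]
  exact epsProd_eq_zero fun hl => List.disjoint_of_nodup_append hl h (List.mem_singleton_self j)

theorem deltaFrom_succ (n s k : ℕ) :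
    deltaFrom n s (k + 1) = deltaFrom n s k * (epsNat n (s + k + 1) - epsNat n (s + k)) := by
  simp [deltaFrom, List.range_succ]

theorem deltaFrom_mul_deltaFrom (n s a b : ℕ) :
    deltaFrom n s a * deltaFrom n (s + a) b = deltaFrom n s (a + b) := by
  rw [deltaFrom, deltaFrom, deltaFrom, List.range_add, List.map_append, List.prod_append,
    List.map_map]
  congr 3
  funext j
  simp only [Function.comp_apply, add_assoc]

theorem epsProd_range_mul_deltaFrom (n s k : ℕ) :
    epsProd n (List.range (s + 1)) * deltaFrom n s k = epsProd n (List.range (s + k + 1)) := by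
  induction k with
  | zero => rw [deltaFrom, List.range_zero, List.map_nil, List.prod_nil, mul_one, add_zero]
  | succ k ih =>
    rw [deltaFrom_succ, ← mul_assoc, ih, mul_sub,
      epsProd_mul_epsNat_of_mem (j := s + k) (List.mem_range.mpr (by omega)), sub_zero,
      ← epsProd_concat, ← List.range_succ]
    rfl

theorem epsNat_sub_epsNat_mul_deltaFrom {n s j k : ℕ} (hj : j < k) :
    (epsNat n (s + j + 1) - epsNat n (s + j)) * deltaFrom n s k = 0 := by
  have hprod : deltaFrom n s k =
      (((List.range k).map fun j => natSingle n (s + j + 1) - natSingle n (s + j)).map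
        (ι ℝ)).prod := by
    simp [deltaFrom, epsNat, Function.comp_def]
  rw [hprod, epsNat, epsNat, ← map_sub]
  exact ι_mul_list_prod_map_ι (List.mem_map_of_mem (List.mem_range.mpr hj))

theorem epsNat_mul_deltaFrom_zero {n i k : ℕ} (hi : i ≤ k) :
    epsNat n i * deltaFrom n 0 k = epsProd n (List.range (k + 1)) := by
  have htelescope : epsNat n i =
      epsNat n 0 + ∑ j ∈ Finset.range i, (epsNat n (0 + j + 1) - epsNat n (0 + j)) := by
    simp only [zero_add, Finset.sum_range_sub]
    abel
  calc epsNat n i * deltaFrom n 0 k = epsNat n 0 * deltaFrom n 0 k := by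
        rw [htelescope, add_mul, Finset.sum_mul, Finset.sum_eq_zero, add_zero]
        exact fun j hj => epsNat_sub_epsNat_mul_deltaFrom (by simp at hj; omega)
    _ = epsProd n (List.range (0 + 1)) * deltaFrom n 0 k := by simp [epsProd]
    _ = epsProd n (List.range (k + 1)) := by rw [epsProd_range_mul_deltaFrom, zero_add]

def succAboveNat (i j : ℕ) : ℕ := if j < i then j else j + 1

theorem val_succAbove {n : ℕ} (i : Fin (n + 2)) (j : Fin (n + 1)) :
    (i.succAbove j : ℕ) = succAboveNat i j := by
  simp only [Fin.succAbove, Fin.lt_def, succAboveNat, Fin.val_castSucc]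
  split_ifs <;> rfl

/-- `ε_0 ⋯ ε_{i-1} ε_{i+1} ⋯ ε_k` (for `i ≤ k`). -/
def piOmit (n i k : ℕ) : Lam n := epsProd n ((List.range k).map (succAboveNat i))

theorem piOmit_succ (n i k : ℕ) :
    piOmit n i (k + 1) = piOmit n i k * epsNat n (succAboveNat i k) := by
  rw [piOmit, List.range_succ, List.map_append, List.map_singleton, epsProd_concat, piOmit]

theorem piOmit_mul_epsNat_of_lt {n i k : ℕ} (h : i < k) : piOmit n i k * epsNat n k = 0 :=
  epsProd_mul_epsNat_of_mem (List.mem_map.mpr ⟨k - 1, List.mem_range.mpr (by omega),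
    by simp only [succAboveNat]; split_ifs <;> omega⟩)

theorem piOmit_succ_self (n k : ℕ) : piOmit n (k + 1) k = piOmit n k k := by
  refine congrArg (epsProd n) (List.map_congr_left fun j hj => ?_)
  have hj : j < k := List.mem_range.mp hj
  simp only [succAboveNat, if_pos hj, if_pos (Nat.lt_succ_of_lt hj)]

theorem deltaFrom_zero_eq_sum (n k : ℕ) :
    deltaFrom n 0 k = ∑ i ∈ Finset.range (k + 1), (-1 : ℤ) ^ i • piOmit n i k := by
  induction k with
  | zero => simp [deltaFrom, piOmit, epsProd]
  | succ k ih =>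
    have hup : ∀ i ∈ Finset.range (k + 1),
        piOmit n i k * epsNat n (k + 1) = piOmit n i (k + 1) := by
      intro i hi
      rw [piOmit_succ, succAboveNat, if_neg (by simp at hi; omega)]
    have hdown : ∑ i ∈ Finset.range (k + 1), (-1 : ℤ) ^ i • (piOmit n i k * epsNat n k) =
        (-1 : ℤ) ^ k • piOmit n (k + 1) (k + 1) := by
      rw [Finset.sum_eq_single_of_mem k (Finset.self_mem_range_succ k), piOmit_succ,
        succAboveNat, if_pos (Nat.lt_succ_self k), piOmit_succ_self]
      intro i hi hik
      rw [piOmit_mul_epsNat_of_lt (by simp at hi; omega), smul_zero]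
    calc deltaFrom n 0 (k + 1)
        = ∑ i ∈ Finset.range (k + 1), (-1 : ℤ) ^ i • (piOmit n i k * epsNat n (k + 1)) -
            ∑ i ∈ Finset.range (k + 1), (-1 : ℤ) ^ i • (piOmit n i k * epsNat n k) := by
          simp only [deltaFrom_succ, ih, zero_add, Finset.sum_mul, mul_sub, smul_mul_assoc]
      _ = ∑ i ∈ Finset.range (k + 1 + 1), (-1 : ℤ) ^ i • piOmit n i (k + 1) := by
          rw [Finset.sum_congr rfl fun i hi => by rw [hup i hi], hdown,
            Finset.sum_range_succ _ (k + 1), pow_succ, mul_neg_one, neg_smul, sub_eq_add_neg]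

theorem eps_mul_Delta (n : ℕ) (i : Fin (n + 1)) : eps n i * Delta n = piTop n := by
  rw [eps_eq_epsNat, Delta_eq_deltaFrom, piTop_eq_epsProd]
  exact epsNat_mul_deltaFrom_zero (Nat.lt_succ_iff.mp i.is_lt)

theorem sum_dcoface_piTop (m : ℕ) :
    ∑ i ∈ Finset.range (m + 2),
        ((-1 : ℤ) ^ i) • dcoface m ⟨min i (m + 1), Nat.lt_succ_of_le (min_le_right _ _)⟩ (piTop m) =
      Delta (m + 1) := by
  rw [Delta_eq_deltaFrom, deltaFrom_zero_eq_sum]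
  refine Finset.sum_congr rfl fun i hi => ?_
  rw [dcoface, genMap_piTop _ _ (val_succAbove _), ← piOmit]
  congr 2
  exact min_eq_left (Nat.lt_succ_iff.mp (Finset.mem_range.mp hi))

theorem cup_Delta_Delta (p q : ℕ) : cup p q (Delta p) (Delta q) = Delta (p + q) := by
  rw [cup_eq, genMap_Delta (a := p) (b := p + q) _ 0 fun _ => (zero_add _).symm,
    genMap_Delta (a := q) (b := p + q) _ p fun _ => rfl, Delta_eq_deltaFrom (p + q)]
  simpa only [zero_add] using deltaFrom_mul_deltaFrom (p + q) 0 p q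

theorem cup_piTop_Delta (p q : ℕ) : cup p q (piTop p) (Delta q) = piTop (p + q) := by
  rw [cup_eq, genMap_piTop (a := p) (b := p + q) _ id fun _ => rfl, List.map_id,
    genMap_Delta (a := q) (b := p + q) _ p fun _ => rfl, epsProd_range_mul_deltaFrom,
    piTop_eq_epsProd]

theorem cup_piTop_piTop (p q : ℕ) : cup p q (piTop p) (piTop q) = 0 := by
  rw [cup_eq, genMap_piTop (a := p) (b := p + q) _ id fun _ => rfl, List.map_id,
    genMap_piTop (a := q) (b := p + q) _ (p + ·) fun _ => rfl, ← epsProd_append]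
  refine epsProd_eq_zero fun hnodup => List.disjoint_of_nodup_append hnodup
    (List.mem_range.mpr p.lt_succ_self) (List.mem_map.mpr ⟨0, by simp, add_zero p⟩)

/-- The structure relations: (1) `ε_i Δ_n = π_n`;
(2) `Σ_{i=0}^n (-1)^i d^i(π_{n-1}) = Δ_n`; (3) `Δ_p ∪ Δ_q = Δ_{p+q}`;
(4) `π_p ∪ Δ_q = π_{p+q}`; (5) `π_p ∪ π_q = 0`. -/
theorem stmt_18 :
    (∀ (n : ℕ) (i : Fin (n + 1)), eps n i * Delta n = piTop n) ∧
    (∀ m : ℕ, (∑ i ∈ Finset.range (m + 2),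
        ((-1 : ℤ) ^ i) • dcoface m ⟨min i (m + 1), by omega⟩ (piTop m)) = Delta (m + 1)) ∧
    (∀ p q : ℕ, cup p q (Delta p) (Delta q) = Delta (p + q)) ∧
    (∀ p q : ℕ, cup p q (piTop p) (Delta q) = piTop (p + q)) ∧
    (∀ p q : ℕ, cup p q (piTop p) (piTop q) = 0) :=
  ⟨eps_mul_Delta, sum_dcoface_piTop, cup_Delta_Delta, cup_piTop_Delta, cup_piTop_piTop⟩
end
end
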